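/- arXiv:1205.6558 — 5 statements merged into one kernel-verified Lean document; each statement's English description precedes it below -/
import Mathlib

section
/- Let G_0, G_1, G_2 be directed graphs (finite vertex sets, countable edge sets) with V_0 ∩ V_1 ∩ V_2 = ∅. Then the reduction operation is associative: G_0 ∷ (G_1 ∷ G_2) = (G_0 ∷ G_1) ∷ G_2, where both are equal to the graph on V_0 Δ V_1 Δ V_2 whose edges are the 3-alternating paths between G_0, G_1, G_2 with endpoints in V_0 Δ V_1 Δ V_2. -/
/-- A directed graph with a finite set of vertex locations. -/
structure DGraph (V : Type) where
  verts : Finset V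
  E : Type
  src : E → V
  tgt : E → V
  src_mem : ∀ e, src e ∈ verts
  tgt_mem : ∀ e, tgt e ∈ verts

namespace DGraph

variable {V : Type} [DecidableEq V]

def psrc (G H : DGraph V) : G.E ⊕ H.E → V := Sum.elim G.src H.src
def ptgt (G H : DGraph V) : G.E ⊕ H.E → V := Sum.elim G.tgt H.tgt

/-- An alternating path in the plugging `G □ H`: a nonempty composable sequence of
colored edges whose consecutive edges have distinct colors. -/
structure AltPath (G H : DGraph V) where
  edges : List (G.E ⊕ H.E)
  ne : edges ≠ []
  chain : edges.Chain' (fun e f => ptgt G H e = psrc G H f ∧ e.isLeft ≠ f.isLeft)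

def AltPath.src {G H : DGraph V} (p : AltPath G H) : V := psrc G H (p.edges.head p.ne)
def AltPath.tgt {G H : DGraph V} (p : AltPath G H) : V := ptgt G H (p.edges.getLast p.ne)

/-- The reduction `G ∷ H`: vertices the symmetric difference, edges the alternating
paths beginning and ending in the symmetric difference. -/
def reduct (G H : DGraph V) : DGraph V where
  verts := symmDiff G.verts H.verts
  E := {p : AltPath G H //
        p.src ∈ symmDiff G.verts H.verts ∧ p.tgt ∈ symmDiff G.verts H.verts}
  src := fun p => p.1.src
  tgt := fun p => p.1.tgt
  src_mem := fun p => p.2.1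
  tgt_mem := fun p => p.2.2

variable (G₀ G₁ G₂ : DGraph V)

/-- source map of the 3-colored union `G₀ □ G₁ □ G₂` -/
def tsrc : G₀.E ⊕ G₁.E ⊕ G₂.E → V := Sum.elim G₀.src (Sum.elim G₁.src G₂.src)

/-- target map of the 3-colored union `G₀ □ G₁ □ G₂` -/
def ttgt : G₀.E ⊕ G₁.E ⊕ G₂.E → V := Sum.elim G₀.tgt (Sum.elim G₁.tgt G₂.tgt)

/-- coloring of the edges of `G₀ □ G₁ □ G₂` -/
def tcol : G₀.E ⊕ G₁.E ⊕ G₂.E → Fin 3 :=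
  Sum.elim (fun _ => 0) (Sum.elim (fun _ => 1) (fun _ => 2))

/-- A 3-alternating path between `G₀`, `G₁`, `G₂`: consecutive edges have distinct
colors. -/
structure TriPath where
  edges : List (G₀.E ⊕ G₁.E ⊕ G₂.E)
  ne : edges ≠ []
  chain : edges.Chain' (fun e f =>
    ttgt G₀ G₁ G₂ e = tsrc G₀ G₁ G₂ f ∧ tcol G₀ G₁ G₂ e ≠ tcol G₀ G₁ G₂ f)

def TriPath.src (p : TriPath G₀ G₁ G₂) : V := tsrc G₀ G₁ G₂ (p.edges.head p.ne)
def TriPath.tgt (p : TriPath G₀ G₁ G₂) : V := ttgt G₀ G₁ G₂ (p.edges.getLast p.ne)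

/-- The simultaneous reduction of `G₀`, `G₁`, `G₂`: the graph on `V₀ Δ V₁ Δ V₂` whose
edges are the 3-alternating paths with endpoints in `V₀ Δ V₁ Δ V₂`. -/
def triReduct : DGraph V where
  verts := symmDiff (symmDiff G₀.verts G₁.verts) G₂.verts
  E := {p : TriPath G₀ G₁ G₂ //
        p.src ∈ symmDiff (symmDiff G₀.verts G₁.verts) G₂.verts ∧
        p.tgt ∈ symmDiff (symmDiff G₀.verts G₁.verts) G₂.verts}
  src := fun p => p.1.src
  tgt := fun p => p.1.tgt
  src_mem := fun p => p.2.1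
  tgt_mem := fun p => p.2.2

/-- Identity of located graphs: same vertex sets and an endpoint-preserving bijection
of the edges. -/
def IsIso (G H : DGraph V) : Prop :=
  G.verts = H.verts ∧ ∃ e : G.E ≃ H.E,
    (∀ x, H.src (e x) = G.src x) ∧ (∀ x, H.tgt (e x) = G.tgt x)

end DGraph

/-!
Flattening an edge of `G₀ ∷ (G₁ ∷ G₂)`, i.e. an alternating path of `G₀ □ (G₁ ∷ G₂)`, replaces
each of its `G₁ ∷ G₂`-edges by the alternating path of `G₁ □ G₂` it stands for, and gives a
3-alternating path with the same endpoints. Alternation forbids two consecutive `G₁ ∷ G₂`-edges,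
so these are recovered as the maximal `G₁`/`G₂`-runs of the flattened path: flattening is
injective. Conversely, each endpoint of a maximal run of a 3-alternating path is an endpoint of
the path or lies on a `G₀`-edge; as `V₀ ∩ V₁ ∩ V₂ = ∅`, in both cases it lies in `V₁ Δ V₂`, so
every run is an edge of `G₁ ∷ G₂`. The other bracketing reduces to this one through
`(G₀ ∷ G₁) ∷ G₂ ≅ G₂ ∷ (G₀ ∷ G₁)` and a cyclic relabelling of the three colours.
-/

theorem Finset.mem_symmDiff_of_mem_of_inter_eq_empty {V : Type*} [DecidableEq V] {A B C : Finset V}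
    (h : A ∩ B ∩ C = ∅) {v : V} (hA : v ∈ A) (hBC : v ∈ B ∨ v ∈ C) : v ∈ symmDiff B C := by
  have : v ∉ A ∩ B ∩ C := by simp [h]
  simp only [Finset.mem_inter, not_and] at this
  rw [Finset.mem_symmDiff]
  tauto

theorem Finset.mem_symmDiff_of_mem_symmDiff_symmDiff {V : Type*} [DecidableEq V] {A B C : Finset V}
    (h : A ∩ B ∩ C = ∅) {v : V} (hv : v ∈ symmDiff (symmDiff A B) C) (hBC : v ∈ B ∨ v ∈ C) :
    v ∈ symmDiff B C := by
  have : v ∉ A ∩ B ∩ C := by simp [h]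
  simp only [Finset.mem_inter, not_and] at this
  simp only [Finset.mem_symmDiff] at hv ⊢
  tauto

theorem List.exists_eq_map_inr_append {α β : Type*} :
    ∀ l : List (α ⊕ β), ∃ (r : List β) (rest : List (α ⊕ β)),
      l = r.map Sum.inr ++ rest ∧ ∀ x ∈ rest.head?, x.isLeft
  | [] => ⟨[], [], rfl, by simp⟩
  | .inl a :: l => ⟨[], .inl a :: l, rfl, by simp⟩
  | .inr b :: l => by
    obtain ⟨r, rest, rfl, hrest⟩ := List.exists_eq_map_inr_append l
    exact ⟨b :: r, rest, rfl, hrest⟩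

namespace DGraph

variable {V : Type}

def induced (S : Finset V) {α : Type} (s t : α → V) : DGraph V where
  verts := S
  E := {a // s a ∈ S ∧ t a ∈ S}
  src a := s a.1
  tgt a := t a.1
  src_mem a := a.2.1
  tgt_mem a := a.2.2

theorem IsIso.symm {G H : DGraph V} : IsIso G H → IsIso H G := by
  rintro ⟨hv, e, hs, ht⟩
  exact ⟨hv.symm, e.symm, fun y => by rw [← hs, e.apply_symm_apply],
    fun y => by rw [← ht, e.apply_symm_apply]⟩

theorem IsIso.trans {G H K : DGraph V} : IsIso G H → IsIso H K → IsIso G K := by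
  rintro ⟨hv, e, hs, ht⟩ ⟨hv', e', hs', ht'⟩
  exact ⟨hv.trans hv', e.trans e', fun x => (hs' _).trans (hs x),
    fun x => (ht' _).trans (ht x)⟩

theorem isIso_induced {S T : Finset V} {α β : Type} {s t : α → V} {s' t' : β → V}
    (hST : S = T) (f : α → β) (hf : Function.Injective f)
    (hs : ∀ a, s' (f a) = s a) (ht : ∀ a, t' (f a) = t a)
    (hsurj : ∀ b, s' b ∈ T → t' b ∈ T → ∃ a, f a = b) :
    IsIso (induced S s t) (induced T s' t') := by
  subst hST
  let F : (induced S s t).E → (induced S s' t').E := fun a =>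
    ⟨f a.1, by rw [hs, ht]; exact a.2⟩
  have hF : Function.Bijective F := by
    refine ⟨fun a b hab => Subtype.ext (hf (congrArg Subtype.val hab)), fun b => ?_⟩
    obtain ⟨a, ha⟩ := hsurj b.1 b.2.1 b.2.2
    exact ⟨⟨a, by rw [← hs, ← ht, ha]; exact b.2⟩, Subtype.ext ha⟩
  exact ⟨rfl, Equiv.ofBijective F hF, fun a => hs a.1, fun a => ht a.1⟩

theorem isIso_induced_of_leftInverse {S T : Finset V} {α β : Type} {s t : α → V}
    {s' t' : β → V} (hST : S = T) (f : α → β) (g : β → α) (hgf : Function.LeftInverse g f)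
    (hfg : Function.RightInverse g f)
    (hs : ∀ a, s' (f a) = s a) (ht : ∀ a, t' (f a) = t a) :
    IsIso (induced S s t) (induced T s' t') :=
  isIso_induced hST f hgf.injective hs ht fun b _ _ => ⟨g b, hfg b⟩

theorem reduct_eq_induced [DecidableEq V] (G H : DGraph V) :
    reduct G H = induced (symmDiff G.verts H.verts) (AltPath.src (G := G) (H := H))
      AltPath.tgt := rfl

theorem triReduct_eq_induced [DecidableEq V] (G₀ G₁ G₂ : DGraph V) :
    triReduct G₀ G₁ G₂ = induced (symmDiff (symmDiff G₀.verts G₁.verts) G₂.verts)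
      (TriPath.src G₀ G₁ G₂) (TriPath.tgt G₀ G₁ G₂) := rfl

def AltRel (G H : DGraph V) (e f : G.E ⊕ H.E) : Prop :=
  ptgt G H e = psrc G H f ∧ e.isLeft ≠ f.isLeft

def TriRel (G₀ G₁ G₂ : DGraph V) (e f : G₀.E ⊕ G₁.E ⊕ G₂.E) : Prop :=
  ttgt G₀ G₁ G₂ e = tsrc G₀ G₁ G₂ f ∧ tcol G₀ G₁ G₂ e ≠ tcol G₀ G₁ G₂ f

theorem psrc_mem (G H : DGraph V) (e : G.E ⊕ H.E) :
    psrc G H e ∈ G.verts ∨ psrc G H e ∈ H.verts := by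
  rcases e with e | e
  exacts [.inl (G.src_mem e), .inr (H.src_mem e)]

theorem ptgt_mem (G H : DGraph V) (e : G.E ⊕ H.E) :
    ptgt G H e ∈ G.verts ∨ ptgt G H e ∈ H.verts := by
  rcases e with e | e
  exacts [.inl (G.tgt_mem e), .inr (H.tgt_mem e)]

theorem tsrc_inr (G₀ G₁ G₂ : DGraph V) (k : G₁.E ⊕ G₂.E) :
    tsrc G₀ G₁ G₂ (.inr k) = psrc G₁ G₂ k := by
  cases k <;> rfl

theorem ttgt_inr (G₀ G₁ G₂ : DGraph V) (k : G₁.E ⊕ G₂.E) :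
    ttgt G₀ G₁ G₂ (.inr k) = ptgt G₁ G₂ k := by
  cases k <;> rfl

theorem tcol_eq_zero_iff {G₀ G₁ G₂ : DGraph V} (a : G₀.E ⊕ G₁.E ⊕ G₂.E) :
    tcol G₀ G₁ G₂ a = 0 ↔ a.isLeft := by
  rcases a with e | e | e <;> simp [tcol]

theorem triRel_inr_inr {G₀ G₁ G₂ : DGraph V} {a b : G₁.E ⊕ G₂.E} :
    TriRel G₀ G₁ G₂ (.inr a) (.inr b) ↔ AltRel G₁ G₂ a b := by
  cases a <;> cases b <;> simp [TriRel, AltRel, tsrc, ttgt, tcol, psrc, ptgt]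

theorem AltPath.edges_injective {G H : DGraph V} :
    Function.Injective (AltPath.edges (G := G) (H := H)) := by
  rintro ⟨⟩ ⟨⟩ rfl
  rfl

theorem TriPath.edges_injective {G₀ G₁ G₂ : DGraph V} :
    Function.Injective (TriPath.edges (G₀ := G₀) (G₁ := G₁) (G₂ := G₂)) := by
  rintro ⟨⟩ ⟨⟩ rfl
  rfl

theorem TriPath.src_eq_of_head?_eq {G₀ G₁ G₂ : DGraph V} {q : TriPath G₀ G₁ G₂}
    {x : G₀.E ⊕ G₁.E ⊕ G₂.E} (hx : q.edges.head? = some x) : q.src = tsrc G₀ G₁ G₂ x := by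
  rw [TriPath.src, Option.some.inj ((List.head?_eq_some_head q.ne).symm.trans hx)]

theorem TriPath.tgt_eq_of_getLast?_eq {G₀ G₁ G₂ : DGraph V} {q : TriPath G₀ G₁ G₂}
    {x : G₀.E ⊕ G₁.E ⊕ G₂.E} (hx : q.edges.getLast? = some x) : q.tgt = ttgt G₀ G₁ G₂ x := by
  rw [TriPath.tgt, Option.some.inj ((List.getLast?_eq_some_getLast q.ne).symm.trans hx)]

section Swap

variable {G H : DGraph V}

theorem altRel_swap {e f : G.E ⊕ H.E} : AltRel H G e.swap f.swap ↔ AltRel G H e f := by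
  cases e <;> cases f <;> simp [AltRel, psrc, ptgt]

def AltPath.swap (p : AltPath G H) : AltPath H G where
  edges := p.edges.map Sum.swap
  ne := by simpa using p.ne
  chain := (List.isChain_map _).2 (p.chain.imp fun _ _ => altRel_swap.2)

theorem AltPath.swap_swap (p : AltPath G H) : p.swap.swap = p := by
  obtain ⟨l, _, _⟩ := p
  simp [AltPath.swap, Function.comp_def]

theorem AltPath.src_swap (p : AltPath G H) : p.swap.src = p.src := by
  simp only [AltPath.src, AltPath.swap, List.head_map]
  cases p.edges.head p.ne <;> rfl

theorem AltPath.tgt_swap (p : AltPath G H) : p.swap.tgt = p.tgt := by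
  simp only [AltPath.tgt, AltPath.swap, List.getLast_map]
  cases p.edges.getLast p.ne <;> rfl

theorem reduct_comm [DecidableEq V] (G H : DGraph V) : IsIso (reduct G H) (reduct H G) := by
  rw [reduct_eq_induced, reduct_eq_induced]
  exact isIso_induced_of_leftInverse (symmDiff_comm _ _) AltPath.swap AltPath.swap
    AltPath.swap_swap AltPath.swap_swap AltPath.src_swap AltPath.tgt_swap

end Swap

section Rotate

variable {G₀ G₁ G₂ : DGraph V}

def rotateEdge : G₂.E ⊕ G₀.E ⊕ G₁.E → G₀.E ⊕ G₁.E ⊕ G₂.E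
  | .inl e => .inr (.inr e)
  | .inr (.inl e) => .inl e
  | .inr (.inr e) => .inr (.inl e)

theorem tcol_rotateEdge (x : G₂.E ⊕ G₀.E ⊕ G₁.E) :
    tcol G₀ G₁ G₂ (rotateEdge x) = tcol G₂ G₀ G₁ x + 2 := by
  rcases x with e | e | e <;> rfl

theorem triRel_rotateEdge {x y : G₂.E ⊕ G₀.E ⊕ G₁.E} :
    TriRel G₀ G₁ G₂ (rotateEdge x) (rotateEdge y) ↔ TriRel G₂ G₀ G₁ x y := by
  simp only [TriRel, tcol_rotateEdge, ne_eq, add_left_inj]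
  rcases x with e | e | e <;> rcases y with f | f | f <;> rfl

def TriPath.rotate (p : TriPath G₂ G₀ G₁) : TriPath G₀ G₁ G₂ where
  edges := p.edges.map rotateEdge
  ne := by simpa using p.ne
  chain := (List.isChain_map _).2 (p.chain.imp fun _ _ => triRel_rotateEdge.2)

theorem TriPath.rotate_rotate_rotate (p : TriPath G₀ G₁ G₂) : p.rotate.rotate.rotate = p := by
  obtain ⟨l, _, _⟩ := p
  simp only [TriPath.rotate, List.map_map, TriPath.mk.injEq]
  conv_rhs => rw [← List.map_id l]
  congr 1
  funext x
  rcases x with e | e | e <;> rfl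

theorem TriPath.src_rotate (p : TriPath G₂ G₀ G₁) : p.rotate.src = p.src := by
  simp only [TriPath.src, TriPath.rotate, List.head_map]
  rcases p.edges.head p.ne with e | e | e <;> rfl

theorem TriPath.tgt_rotate (p : TriPath G₂ G₀ G₁) : p.rotate.tgt = p.tgt := by
  simp only [TriPath.tgt, TriPath.rotate, List.getLast_map]
  rcases p.edges.getLast p.ne with e | e | e <;> rfl

theorem triReduct_rotate [DecidableEq V] (G₀ G₁ G₂ : DGraph V) :
    IsIso (triReduct G₂ G₀ G₁) (triReduct G₀ G₁ G₂) := by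
  rw [triReduct_eq_induced, triReduct_eq_induced]
  refine isIso_induced_of_leftInverse ?_ TriPath.rotate (fun p => p.rotate.rotate)
    TriPath.rotate_rotate_rotate TriPath.rotate_rotate_rotate TriPath.src_rotate
    TriPath.tgt_rotate
  rw [symmDiff_comm G₂.verts, symmDiff_right_comm]

end Rotate

section Flatten

variable [DecidableEq V] {G₀ G₁ G₂ : DGraph V}

variable (G₀ G₁ G₂) in
def expandEdge : G₀.E ⊕ (reduct G₁ G₂).E → List (G₀.E ⊕ G₁.E ⊕ G₂.E)
  | .inl e => [.inl e]
  | .inr p => p.1.edges.map .inr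

theorem expandEdge_ne_nil (x : G₀.E ⊕ (reduct G₁ G₂).E) : expandEdge G₀ G₁ G₂ x ≠ [] := by
  cases x with
  | inl e => simp [expandEdge]
  | inr p => simpa [expandEdge] using p.1.ne

theorem tsrc_head_expandEdge (x : G₀.E ⊕ (reduct G₁ G₂).E) :
    tsrc G₀ G₁ G₂ ((expandEdge G₀ G₁ G₂ x).head (expandEdge_ne_nil x)) =
      psrc G₀ (reduct G₁ G₂) x := by
  cases x with
  | inl e => rfl
  | inr p =>
    simp only [expandEdge, List.head_map, tsrc_inr]
    rfl

theorem ttgt_getLast_expandEdge (x : G₀.E ⊕ (reduct G₁ G₂).E) :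
    ttgt G₀ G₁ G₂ ((expandEdge G₀ G₁ G₂ x).getLast (expandEdge_ne_nil x)) =
      ptgt G₀ (reduct G₁ G₂) x := by
  cases x with
  | inl e => rfl
  | inr p =>
    simp only [expandEdge, List.getLast_map, ttgt_inr]
    rfl

theorem isLeft_of_mem_expandEdge {x : G₀.E ⊕ (reduct G₁ G₂).E} {a : G₀.E ⊕ G₁.E ⊕ G₂.E}
    (ha : a ∈ expandEdge G₀ G₁ G₂ x) : a.isLeft = x.isLeft := by
  cases x with
  | inl e => simp_all [expandEdge]
  | inr p =>
    obtain ⟨k, -, rfl⟩ := List.mem_map.1 ha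
    rfl

theorem isChain_expandEdge (x : G₀.E ⊕ (reduct G₁ G₂).E) :
    (expandEdge G₀ G₁ G₂ x).IsChain (TriRel G₀ G₁ G₂) := by
  cases x with
  | inl e => exact List.isChain_singleton _
  | inr p => exact (List.isChain_map _).2 (p.1.chain.imp fun _ _ => triRel_inr_inr.2)

theorem altRel_iff_junction {x y : G₀.E ⊕ (reduct G₁ G₂).E} :
    AltRel G₀ (reduct G₁ G₂) x y ↔ (x.isLeft ∨ y.isLeft) ∧
      ∀ a ∈ (expandEdge G₀ G₁ G₂ x).getLast?, ∀ b ∈ (expandEdge G₀ G₁ G₂ y).head?,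
        TriRel G₀ G₁ G₂ a b := by
  rw [List.getLast?_eq_some_getLast (expandEdge_ne_nil x),
    List.head?_eq_some_head (expandEdge_ne_nil y)]
  simp only [Option.mem_def, Option.some.injEq, forall_eq', TriRel, tsrc_head_expandEdge,
    ttgt_getLast_expandEdge, ne_eq]
  have hx := (tcol_eq_zero_iff _).trans
    (Bool.eq_iff_iff.1 (isLeft_of_mem_expandEdge (List.getLast_mem (expandEdge_ne_nil x))))
  have hy := (tcol_eq_zero_iff _).trans
    (Bool.eq_iff_iff.1 (isLeft_of_mem_expandEdge (List.head_mem (expandEdge_ne_nil y))))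
  generalize tcol G₀ G₁ G₂ _ = c at hx ⊢
  generalize tcol G₀ G₁ G₂ _ = d at hy ⊢
  unfold AltRel
  cases hxl : x.isLeft <;> cases hyl : y.isLeft <;> simp_all
  exact fun _ h => hy h.symm

theorem nil_notMem_map_expandEdge (L : List (G₀.E ⊕ (reduct G₁ G₂).E)) :
    [] ∉ L.map (expandEdge G₀ G₁ G₂) := by
  intro h
  obtain ⟨x, -, hx⟩ := List.mem_map.1 h
  exact expandEdge_ne_nil x hx

theorem isChain_flatMap_expandEdge {L : List (G₀.E ⊕ (reduct G₁ G₂).E)}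
    (hL : L.IsChain (AltRel G₀ (reduct G₁ G₂))) :
    (L.flatMap (expandEdge G₀ G₁ G₂)).IsChain (TriRel G₀ G₁ G₂) := by
  rw [List.flatMap_def, List.isChain_flatten (nil_notMem_map_expandEdge _)]
  refine ⟨fun l hl => ?_, ?_⟩
  · obtain ⟨x, -, rfl⟩ := List.mem_map.1 hl
    exact isChain_expandEdge x
  · exact (List.isChain_map _).2 (hL.imp fun _ _ h => (altRel_iff_junction.1 h).2)

theorem isChain_altRel_cons {x : G₀.E ⊕ (reduct G₁ G₂).E} {L : List (G₀.E ⊕ (reduct G₁ G₂).E)}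
    (hl : ((x :: L).flatMap (expandEdge G₀ G₁ G₂)).IsChain (TriRel G₀ G₁ G₂))
    (hL : L.IsChain (AltRel G₀ (reduct G₁ G₂))) (hx : ∀ y ∈ L.head?, x.isLeft ∨ y.isLeft) :
    (x :: L).IsChain (AltRel G₀ (reduct G₁ G₂)) := by
  rw [List.flatMap_def, List.isChain_flatten (nil_notMem_map_expandEdge _),
    List.isChain_map, List.isChain_cons] at hl
  exact List.isChain_cons.2 ⟨fun y hy => altRel_iff_junction.2 ⟨hx y hy, hl.2.1 y hy⟩, hL⟩

theorem splitBy_flatMap_expandEdge {L : List (G₀.E ⊕ (reduct G₁ G₂).E)}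
    (hL : L.IsChain (AltRel G₀ (reduct G₁ G₂))) :
    (L.flatMap (expandEdge G₀ G₁ G₂)).splitBy (fun a b => a.isRight && b.isRight) =
      L.map (expandEdge G₀ G₁ G₂) := by
  rw [List.flatMap_def]
  refine List.splitBy_flatten (nil_notMem_map_expandEdge L) (fun m hm => ?_) ?_
  · obtain ⟨x | p, -, rfl⟩ := List.mem_map.1 hm
    · exact List.isChain_singleton _
    · exact (List.isChain_map _).2 (p.1.chain.imp fun _ _ _ => rfl)
  · refine (List.isChain_map _).2
      (hL.imp fun x y hxy => ⟨expandEdge_ne_nil x, expandEdge_ne_nil y, ?_⟩)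
    have hx := isLeft_of_mem_expandEdge (List.getLast_mem (expandEdge_ne_nil x))
    have hy := isLeft_of_mem_expandEdge (List.head_mem (expandEdge_ne_nil y))
    rw [Bool.and_eq_false_iff, Sum.isRight_eq_false, Sum.isRight_eq_false, hx, hy]
    exact (altRel_iff_junction.1 hxy).1

theorem expandEdge_injective : Function.Injective (expandEdge G₀ G₁ G₂) := by
  rintro (e | p) (e' | p') h
  · simpa [expandEdge] using h
  · simpa [expandEdge] using congrArg List.head? h
  · simpa [expandEdge] using congrArg List.head? h
  · exact congrArg Sum.inr (Subtype.ext (AltPath.edges_injective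
      (List.map_injective_iff.2 Sum.inr_injective h)))

theorem flatMap_expandEdge_injective {L L' : List (G₀.E ⊕ (reduct G₁ G₂).E)}
    (hL : L.IsChain (AltRel G₀ (reduct G₁ G₂))) (hL' : L'.IsChain (AltRel G₀ (reduct G₁ G₂)))
    (h : L.flatMap (expandEdge G₀ G₁ G₂) = L'.flatMap (expandEdge G₀ G₁ G₂)) : L = L' :=
  List.map_injective_iff.2 expandEdge_injective <| by
    rw [← splitBy_flatMap_expandEdge hL, h, splitBy_flatMap_expandEdge hL']

theorem exists_expandEdge_eq_map_inr {r : List (G₁.E ⊕ G₂.E)} (hr : r ≠ [])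
    (hc : (r.map .inr).IsChain (TriRel G₀ G₁ G₂))
    (hs : psrc G₁ G₂ (r.head hr) ∈ symmDiff G₁.verts G₂.verts)
    (ht : ptgt G₁ G₂ (r.getLast hr) ∈ symmDiff G₁.verts G₂.verts) :
    ∃ q, expandEdge G₀ G₁ G₂ (.inr q) = r.map .inr :=
  ⟨⟨⟨r, hr, ((List.isChain_map _).1 hc).imp fun _ _ => triRel_inr_inr.1⟩, hs, ht⟩, rfl⟩

theorem isLeft_of_mem_head?_of_flatMap_expandEdge {L : List (G₀.E ⊕ (reduct G₁ G₂).E)}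
    {y : G₀.E ⊕ (reduct G₁ G₂).E}
    (hy : y ∈ L.head?) (h : ∀ a ∈ (L.flatMap (expandEdge G₀ G₁ G₂)).head?, a.isLeft) :
    y.isLeft := by
  obtain ⟨L', rfl⟩ := List.head?_eq_some_iff.1 hy
  rw [← isLeft_of_mem_expandEdge (List.head_mem (expandEdge_ne_nil y))]
  exact h _ (by simp [List.head?_eq_some_head (expandEdge_ne_nil y)])

theorem ptgt_getLast_mem_symmDiff (h : G₀.verts ∩ G₁.verts ∩ G₂.verts = ∅)
    {r : List (G₁.E ⊕ G₂.E)} (hr : r ≠ []) {rest : List (G₀.E ⊕ G₁.E ⊕ G₂.E)}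
    (hl : (r.map Sum.inr ++ rest).IsChain (TriRel G₀ G₁ G₂)) (hrest : ∀ x ∈ rest.head?, x.isLeft)
    (hlast : ∀ k, (r.map Sum.inr ++ rest).getLast? = some (.inr k) →
      ptgt G₁ G₂ k ∈ symmDiff G₁.verts G₂.verts) :
    ptgt G₁ G₂ (r.getLast hr) ∈ symmDiff G₁.verts G₂.verts := by
  have hlast_run : (r.map (Sum.inr (α := G₀.E))).getLast? = some (.inr (r.getLast hr)) := by
    rw [List.getLast?_map, List.getLast?_eq_some_getLast hr]
    rfl
  rcases rest with _ | ⟨_ | b, rest⟩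
  · exact hlast _ (by rwa [List.append_nil])
  · have hv := ((List.isChain_append.1 hl).2.2 _ hlast_run _ rfl).1
    rw [ttgt_inr] at hv
    exact Finset.mem_symmDiff_of_mem_of_inter_eq_empty h (hv ▸ G₀.src_mem _) (ptgt_mem _ _ _)
  · simp at hrest

-- The list is consumed one `G₀`-edge or one maximal `G₁`/`G₂`-run at a time.
theorem exists_flatMap_expandEdge_eq (h : G₀.verts ∩ G₁.verts ∩ G₂.verts = ∅) :
    ∀ l : List (G₀.E ⊕ G₁.E ⊕ G₂.E), l.IsChain (TriRel G₀ G₁ G₂) →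
      (∀ k, l.head? = some (.inr k) → psrc G₁ G₂ k ∈ symmDiff G₁.verts G₂.verts) →
      (∀ k, l.getLast? = some (.inr k) → ptgt G₁ G₂ k ∈ symmDiff G₁.verts G₂.verts) →
      ∃ L : List (G₀.E ⊕ (reduct G₁ G₂).E),
        L.IsChain (AltRel G₀ (reduct G₁ G₂)) ∧ L.flatMap (expandEdge G₀ G₁ G₂) = l
  | [], _, _, _ => ⟨[], .nil, rfl⟩
  | .inl e :: l, hl, _, hlast => by
    have hhead : ∀ k, l.head? = some (.inr k) → psrc G₁ G₂ k ∈ symmDiff G₁.verts G₂.verts := by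
      intro k hk
      obtain ⟨t, rfl⟩ := List.head?_eq_some_iff.1 hk
      have hv : G₀.tgt e = psrc G₁ G₂ k := (List.isChain_cons_cons.1 hl).1.1.trans (tsrc_inr ..)
      exact Finset.mem_symmDiff_of_mem_of_inter_eq_empty h (hv ▸ G₀.tgt_mem e) (psrc_mem _ _ k)
    obtain ⟨L, hL, rfl⟩ := exists_flatMap_expandEdge_eq h l hl.tail hhead
      fun k hk => hlast k (by simp [List.getLast?_cons, hk])
    exact ⟨.inl e :: L, isChain_altRel_cons hl hL fun _ _ => .inl rfl, rfl⟩
  | .inr k :: l, hl, hhead, hlast => by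
    obtain ⟨r, rest, rfl, hrest⟩ := List.exists_eq_map_inr_append l
    replace hl : ((k :: r).map Sum.inr ++ rest).IsChain (TriRel G₀ G₁ G₂) := hl
    obtain ⟨q, hq⟩ := exists_expandEdge_eq_map_inr (List.cons_ne_nil k r)
      (List.isChain_append.1 hl).1 (hhead k rfl)
      (ptgt_getLast_mem_symmDiff h (List.cons_ne_nil k r) hl hrest hlast)
    obtain ⟨L, hL, rfl⟩ := exists_flatMap_expandEdge_eq h rest (List.isChain_append.1 hl).2.1
      (fun k hk => absurd (hrest _ hk) (by simp))
      (fun k hk => hlast k (by simp [List.getLast?_cons, hk]))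
    refine ⟨.inr q :: L, isChain_altRel_cons (by rw [List.flatMap_cons, hq]; exact hl) hL
      fun y hy => .inr (isLeft_of_mem_head?_of_flatMap_expandEdge hy hrest), ?_⟩
    rw [List.flatMap_cons, hq]
    rfl
  termination_by l => l.length

def AltPath.flatten (P : AltPath G₀ (reduct G₁ G₂)) : TriPath G₀ G₁ G₂ where
  edges := P.edges.flatMap (expandEdge G₀ G₁ G₂)
  ne h := expandEdge_ne_nil _ (List.flatMap_eq_nil_iff.1 h _ (List.head_mem P.ne))
  chain := isChain_flatMap_expandEdge P.chain

theorem AltPath.src_flatten (P : AltPath G₀ (reduct G₁ G₂)) : P.flatten.src = P.src := by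
  obtain ⟨_ | ⟨x, L⟩, hne, _⟩ := P
  · exact absurd rfl hne
  · simp only [TriPath.src, AltPath.flatten, AltPath.src, List.flatMap_cons,
      List.head_append_of_ne_nil (expandEdge_ne_nil x), List.head_cons]
    exact tsrc_head_expandEdge x

theorem AltPath.tgt_flatten (P : AltPath G₀ (reduct G₁ G₂)) : P.flatten.tgt = P.tgt := by
  obtain ⟨edges, hne, _⟩ := P
  obtain ⟨L, x, rfl⟩ := (List.eq_nil_or_concat edges).resolve_left hne
  simp only [TriPath.tgt, AltPath.flatten, AltPath.tgt, List.concat_eq_append,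
    List.flatMap_append, List.flatMap_singleton,
    List.getLast_append_of_ne_nil _ (expandEdge_ne_nil x), List.getLast_concat]
  exact ttgt_getLast_expandEdge x

theorem AltPath.flatten_injective :
    Function.Injective (AltPath.flatten (G₀ := G₀) (G₁ := G₁) (G₂ := G₂)) := fun P Q h =>
  AltPath.edges_injective (flatMap_expandEdge_injective P.chain Q.chain
    (congrArg TriPath.edges h))

theorem reduct_reduct_right_isIso_triReduct {G₀ G₁ G₂ : DGraph V}
    (h : G₀.verts ∩ G₁.verts ∩ G₂.verts = ∅) :
    IsIso (reduct G₀ (reduct G₁ G₂)) (triReduct G₀ G₁ G₂) := by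
  rw [reduct_eq_induced, triReduct_eq_induced]
  refine isIso_induced (symmDiff_assoc _ _ _).symm AltPath.flatten AltPath.flatten_injective
    AltPath.src_flatten AltPath.tgt_flatten fun q hs ht => ?_
  obtain ⟨L, hL, hLq⟩ := exists_flatMap_expandEdge_eq h q.edges q.chain
    (fun k hk => Finset.mem_symmDiff_of_mem_symmDiff_symmDiff h
      (by rwa [TriPath.src_eq_of_head?_eq hk, tsrc_inr] at hs) (psrc_mem _ _ k))
    (fun k hk => Finset.mem_symmDiff_of_mem_symmDiff_symmDiff h
      (by rwa [TriPath.tgt_eq_of_getLast?_eq hk, ttgt_inr] at ht) (ptgt_mem _ _ k))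
  exact ⟨⟨L, fun hL0 => q.ne (by rw [← hLq, hL0]; rfl), hL⟩, TriPath.edges_injective hLq⟩

theorem reduct_reduct_left_isIso_triReduct {G₀ G₁ G₂ : DGraph V}
    (h : G₀.verts ∩ G₁.verts ∩ G₂.verts = ∅) :
    IsIso (reduct (reduct G₀ G₁) G₂) (triReduct G₀ G₁ G₂) := by
  have h' : G₂.verts ∩ G₀.verts ∩ G₁.verts = ∅ := by
    rwa [Finset.inter_comm, ← Finset.inter_assoc] at h
  exact (reduct_comm _ _).trans
    ((reduct_reduct_right_isIso_triReduct h').trans (triReduct_rotate ..))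

end Flatten

end DGraph

open DGraph

theorem stmt2_general {V : Type} [DecidableEq V] (G₀ G₁ G₂ : DGraph V)
    (h : G₀.verts ∩ G₁.verts ∩ G₂.verts = ∅) :
    IsIso (reduct G₀ (reduct G₁ G₂)) (reduct (reduct G₀ G₁) G₂) ∧
    IsIso (reduct G₀ (reduct G₁ G₂)) (triReduct G₀ G₁ G₂) ∧
    IsIso (reduct (reduct G₀ G₁) G₂) (triReduct G₀ G₁ G₂) := by
  have hright := reduct_reduct_right_isIso_triReduct h
  have hleft := reduct_reduct_left_isIso_triReduct h
  exact ⟨hright.trans hleft.symm, hright, hleft⟩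

/-- Associativity of the reduction: if `V₀ ∩ V₁ ∩ V₂ = ∅` then
`G₀ ∷ (G₁ ∷ G₂) = (G₀ ∷ G₁) ∷ G₂`, both being equal to the graph on `V₀ Δ V₁ Δ V₂`
whose edges are the 3-alternating paths between `G₀, G₁, G₂` with endpoints in
`V₀ Δ V₁ Δ V₂`. -/
theorem stmt2 {V : Type} [DecidableEq V] (G₀ G₁ G₂ : DGraph V)
    [Countable G₀.E] [Countable G₁.E] [Countable G₂.E]
    (h : G₀.verts ∩ G₁.verts ∩ G₂.verts = ∅) :
    IsIso (reduct G₀ (reduct G₁ G₂)) (reduct (reduct G₀ G₁) G₂) ∧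
    IsIso (reduct G₀ (reduct G₁ G₂)) (triReduct G₀ G₁ G₂) ∧
    IsIso (reduct (reduct G₀ G₁) G₂) (triReduct G₀ G₁ G₂) :=
  stmt2_general G₀ G₁ G₂ h
end

section
/- Let F, G, H be directed graphs with V_G ∩ V_H = ∅ and V_G ∪ V_H ⊆ V_F. Then the number of alternating 1-circuits between F and G∪H equals the number of alternating 1-circuits between F and G plus the number of alternating 1-circuits between F∷G and H: ♯C(F, G∪H) = ♯C(F,G) + ♯C(F∷G, H). -/
open scoped ENNReal

/-- A directed weighted graph with a definite (finite) set of vertex locations. -/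
structure EGraph (V : Type) where
  verts : Finset V
  E : Type
  src : E → V
  tgt : E → V
  w : E → ℝ≥0∞
  src_mem : ∀ e, src e ∈ verts
  tgt_mem : ∀ e, tgt e ∈ verts

namespace EGraph

variable {V : Type} [DecidableEq V]

/-- source of an edge of the plugging `G □ H` -/
def psrc (G H : EGraph V) : G.E ⊕ H.E → V := Sum.elim G.src H.src

/-- target of an edge of the plugging `G □ H` -/
def ptgt (G H : EGraph V) : G.E ⊕ H.E → V := Sum.elim G.tgt H.tgt

/-- weight of an edge of the plugging `G □ H` -/
def pw (G H : EGraph V) : G.E ⊕ H.E → ℝ≥0∞ := Sum.elim G.w H.w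

/-- An alternating path in the plugging `G □ H`: a nonempty composable sequence of
colored edges whose consecutive edges have distinct colors. -/
structure AltPath (G H : EGraph V) where
  edges : List (G.E ⊕ H.E)
  ne : edges ≠ []
  chain : edges.Chain' (fun e f => ptgt G H e = psrc G H f ∧ e.isLeft ≠ f.isLeft)

variable {G H : EGraph V}

def AltPath.src (p : AltPath G H) : V := psrc G H (p.edges.head p.ne)
def AltPath.tgt (p : AltPath G H) : V := ptgt G H (p.edges.getLast p.ne)

noncomputable def AltPath.weight (p : AltPath G H) : ℝ≥0∞ :=
  (p.edges.map (pw G H)).prod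

/-- An alternating cycle: the target of the last edge is the source of the first one,
and moreover the colors of the last and first edges differ. -/
def AltPath.IsCycle (p : AltPath G H) : Prop :=
  p.tgt = p.src ∧ (p.edges.getLast p.ne).isLeft ≠ (p.edges.head p.ne).isLeft

/-- A list is primitive (a `1`-cycle) when it is not a proper power of a shorter list. -/
def PrimitiveList {α : Type*} (l : List α) : Prop :=
  ∀ (k : ℕ) (r : List α), l = (List.replicate k r).flatten → k = 1

def AltPath.IsOneCycle (p : AltPath G H) : Prop := p.IsCycle ∧ PrimitiveList p.edges

/-- Equivalence of alternating 1-cycles up to cyclic permutation. -/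
def cycSetoid (G H : EGraph V) : Setoid {p : AltPath G H // p.IsOneCycle} where
  r p q := ∃ k, q.1.edges = p.1.edges.rotate k
  iseqv := by
    constructor
    · exact fun p => ⟨0, (p.1.edges.rotate_zero).symm⟩
    · rintro p q ⟨k, hk⟩
      refine ⟨p.1.edges.length * (k + 1) - k, ?_⟩
      rw [hk, List.rotate_rotate]
      rcases Nat.eq_zero_or_pos p.1.edges.length with h0 | hpos
      · rw [List.length_eq_zero_iff] at h0
        simp [h0]
      · have hkle : k ≤ p.1.edges.length * (k + 1) := by nlinarith
        rw [Nat.add_sub_cancel' hkle, List.rotate_length_mul]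
    · rintro p q r ⟨k, hk⟩ ⟨m, hm⟩
      exact ⟨k + m, by rw [hm, hk, List.rotate_rotate]⟩

/-- The set of alternating 1-circuits between `G` and `H`: alternating 1-cycles up to
cyclic permutation. -/
def Circ (G H : EGraph V) := Quotient (cycSetoid G H)

/-- The weight of a circuit. -/
noncomputable def cweight {G H : EGraph V} : Circ G H → ℝ≥0∞ :=
  Quotient.lift (fun p => p.1.weight)
    (by
      rintro p q ⟨k, hk⟩
      show p.1.weight = q.1.weight
      unfold AltPath.weight
      rw [hk]
      exact (((p.1.edges.map (pw G H)).rotate_perm k).prod_eq).symm.trans (by rw [List.map_rotate]))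

/-- `-log(1-x)`, valued in `[0,∞]`, with the convention `log 0 = -∞`. -/
noncomputable def mval (x : ℝ≥0∞) : ℝ≥0∞ :=
  if 1 ≤ x then ⊤ else ENNReal.ofReal (-Real.log (1 - x.toReal))

/-- The measurement `⟪G,H⟫ = Σ_{π ∈ C(G,H)} -log(1-ω(π))`. -/
noncomputable def meas (G H : EGraph V) : ℝ≥0∞ := ∑' c : Circ G H, mval (cweight c)

/-- The extended measurement value `Σ_{k ≥ 1} x^k / k`. -/
noncomputable def mvalExt (x : ℝ≥0∞) : ℝ≥0∞ := ∑' k : ℕ, x ^ (k + 1) / (k + 1)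

/-- The measurement extended to arbitrary weights. -/
noncomputable def measExt (G H : EGraph V) : ℝ≥0∞ := ∑' c : Circ G H, mvalExt (cweight c)

/-- The union of two graphs: union of the vertices, disjoint union of the edges. -/
def union (G H : EGraph V) : EGraph V where
  verts := G.verts ∪ H.verts
  E := G.E ⊕ H.E
  src := psrc G H
  tgt := ptgt G H
  w := pw G H
  src_mem := by
    rintro (e | e)
    · exact Finset.mem_union_left _ (G.src_mem e)
    · exact Finset.mem_union_right _ (H.src_mem e)
  tgt_mem := by
    rintro (e | e)
    · exact Finset.mem_union_left _ (G.tgt_mem e)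
    · exact Finset.mem_union_right _ (H.tgt_mem e)

/-- The reduction `G ∷ H`: vertices the symmetric difference, edges the alternating
paths with endpoints in the symmetric difference, weighted multiplicatively. -/
noncomputable def reduct (G H : EGraph V) : EGraph V where
  verts := symmDiff G.verts H.verts
  E := {p : AltPath G H //
        p.src ∈ symmDiff G.verts H.verts ∧ p.tgt ∈ symmDiff G.verts H.verts}
  src := fun p => p.1.src
  tgt := fun p => p.1.tgt
  w := fun p => p.1.weight
  src_mem := fun p => p.2.1
  tgt_mem := fun p => p.2.2

/-- The collapsed (simple) graph `Ĝ`, with weights the sums of the weights of parallel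
edges. -/
noncomputable def adj (G : EGraph V) (v u : V) : ℝ≥0∞ :=
  ∑' e : {e : G.E // G.src e = v ∧ G.tgt e = u}, G.w e.1

noncomputable def collapse (G : EGraph V) : EGraph V where
  verts := G.verts
  E := {p : V × V // ∃ e : G.E, G.src e = p.1 ∧ G.tgt e = p.2}
  src := fun p => p.1.1
  tgt := fun p => p.1.2
  w := fun p => adj G p.1.1 p.1.2
  src_mem := fun p => by obtain ⟨e, he, _⟩ := p.2; show p.1.1 ∈ G.verts; rw [← he]; exact G.src_mem e
  tgt_mem := fun p => by obtain ⟨e, _, he⟩ := p.2; show p.1.2 ∈ G.verts; rw [← he]; exact G.tgt_mem e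

end EGraph

/-!
An alternating 1-circuit of `F □ (G ∪ H)` either avoids `H`, and is then a 1-circuit of
`F □ G`, or contains an `H`-edge. In the latter case, cutting it after each `H`-edge writes it
(up to rotation) as `P₁ h₁ P₂ h₂ … Pₙ hₙ`, where each `Pᵢ` is an alternating path of `F □ G`
whose endpoints lie in `V_H ⊆ V_F Δ V_G`, i.e. an edge of `F ∷ G`: the circuit is the expansion
of the alternating circuit `P₁ h₁ … Pₙ hₙ` of `(F ∷ G) □ H`. Because `V_G ⊆ V_F`, every `Pᵢ`
starts and ends with an `F`-edge, so expansion preserves alternation; because the `H`-edges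
act as markers delimiting the `Pᵢ`, expansion is injective up to rotation and preserves
primitivity. This gives a bijection `C(F, G) ⊕ C(F ∷ G, H) ≃ C(F, G ∪ H)`.
-/

open List Function

namespace List

variable {α β : Type*}

theorem rotate_one_flatten_replicate (n : ℕ) (r : List α) :
    (replicate n r).flatten.rotate 1 = (replicate n (r.rotate 1)).flatten := by
  rcases r with _ | ⟨a, t⟩
  · simp
  rcases n with _ | m
  · simp
  have key : ∀ m, t ++ (replicate m (a :: t)).flatten ++ [a] =
      (replicate (m + 1) (t ++ [a])).flatten := by
    intro m
    induction m with
    | zero => simp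
    | succ m ih => rw [replicate_succ, flatten_cons, replicate_succ, flatten_cons, ← ih]; simp
  simpa [replicate_succ] using key m

theorem rotate_flatten_replicate (n k : ℕ) (r : List α) :
    (replicate n r).flatten.rotate k = (replicate n (r.rotate k)).flatten := by
  induction k with
  | zero => simp
  | succ k ih => rw [← rotate_rotate, ih, rotate_one_flatten_replicate, rotate_rotate]

theorem flatMap_flatten_replicate (g : α → List β) (n : ℕ) (l : List α) :
    (replicate n l).flatten.flatMap g = (replicate n (l.flatMap g)).flatten := by
  induction n with
  | zero => simp
  | succ n ih => simp [replicate_succ, ih]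

theorem IsRotated.flatMap {l l' : List α} (h : l ~r l') (g : α → List β) :
    l.flatMap g ~r l'.flatMap g := by
  obtain ⟨n, hn, rfl⟩ := isRotated_iff_mod.1 h
  rw [rotate_eq_drop_append_take hn, flatMap_append]
  conv_lhs => rw [← take_append_drop n l, flatMap_append]
  exact isRotated_append

theorem isRotated_map_iff {f : α → β} (hf : Injective f) {l l' : List α} :
    l.map f ~r l'.map f ↔ l ~r l' :=
  ⟨fun ⟨n, h⟩ => ⟨n, map_injective_iff.2 hf (by rwa [map_rotate])⟩, fun h => h.map f⟩

theorem exists_isRotated_getLast?_eq {l : List α} {x : α} (hx : x ∈ l) :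
    ∃ l', l ~r l' ∧ l'.getLast? = some x := by
  obtain ⟨s, t, rfl⟩ := append_of_mem hx
  refine ⟨t ++ (s ++ [x]), ?_, by simp⟩
  rw [show s ++ x :: t = s ++ [x] ++ t by simp]
  exact isRotated_append

theorem exists_append_cons_of_exists_mem {p : α → Prop} {l : List α} (h : ∃ x ∈ l, p x) :
    ∃ s x t, l = s ++ x :: t ∧ p x ∧ ∀ y ∈ s, ¬ p y := by
  induction l with
  | nil => simp at h
  | cons y l ih =>
    by_cases hy : p y
    · exact ⟨[], y, l, rfl, hy, by simp⟩
    · obtain ⟨s, x, t, rfl, hx, hs⟩ := ih (by simpa [hy] using h)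
      exact ⟨y :: s, x, t, rfl, hx, by simpa [hy] using hs⟩

theorem append_cons_inj_of_forall_not {p : α → Prop} {s₁ s₂ t₁ t₂ : List α} {x₁ x₂ : α}
    (h : s₁ ++ x₁ :: t₁ = s₂ ++ x₂ :: t₂) (hx₁ : p x₁) (hx₂ : p x₂)
    (hs₁ : ∀ y ∈ s₁, ¬ p y) (hs₂ : ∀ y ∈ s₂, ¬ p y) : s₁ = s₂ ∧ x₁ = x₂ ∧ t₁ = t₂ := by
  induction s₁ generalizing s₂ with
  | nil =>
    cases s₂ with
    | nil => simpa using h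
    | cons y s₂ =>
      simp only [nil_append, cons_append, cons.injEq] at h
      exact absurd (h.1 ▸ hx₁) (hs₂ y mem_cons_self)
  | cons y s₁ ih =>
    cases s₂ with
    | nil =>
      simp only [nil_append, cons_append, cons.injEq] at h
      exact absurd (h.1 ▸ hx₂) (hs₁ y mem_cons_self)
    | cons z s₂ =>
      simp only [cons_append, cons.injEq] at h
      obtain ⟨rfl, h₂, h₃⟩ := ih h.2 (fun y hy => hs₁ y (mem_cons_of_mem _ hy))
        (fun y hy => hs₂ y (mem_cons_of_mem _ hy))
      exact ⟨by rw [h.1], h₂, h₃⟩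

theorem isChain_flatMap_iff {R : β → β → Prop} {g : α → List β} (hg : ∀ a, g a ≠ [])
    {l : List α} :
    IsChain R (l.flatMap g) ↔ (∀ a ∈ l, IsChain R (g a)) ∧
      IsChain (fun a b => ∀ x ∈ (g a).getLast?, ∀ y ∈ (g b).head?, R x y) l := by
  rw [flatMap_def, isChain_flatten (by simp [hg]), isChain_map]
  simp

end List

namespace Cycle

variable {α β : Type*}

theorem chain_coe_iff_of_ne_nil {R : α → α → Prop} {l : List α} (hl : l ≠ []) :
    Chain R (l : Cycle α) ↔ IsChain R l ∧ R (l.getLast hl) (l.head hl) := by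
  rw [chain_ne_nil R hl, isChain_cons, and_comm, head?_eq_some_head hl]
  simp

theorem chain_coe_flatMap {R : β → β → Prop} {g : α → List β} (hg : ∀ a, g a ≠ [])
    (hR : ∀ a, IsChain R (g a)) (l : List α) :
    Chain R (l.flatMap g : Cycle β) ↔
      Chain (fun a b => ∀ x ∈ (g a).getLast?, ∀ y ∈ (g b).head?, R x y) (l : Cycle α) := by
  rcases l with _ | ⟨a, m⟩
  · simp
  obtain ⟨b, u, hba⟩ := exists_cons_of_ne_nil (hg a)
  have hclose : ∀ Y : List β, IsChain R (Y ++ [b]) ↔ IsChain R (Y ++ g a) := by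
    intro Y
    have := hR a
    rw [hba] at this ⊢
    simp [isChain_append, this]
  have hunfold : b :: (u ++ m.flatMap g) ++ g a = (a :: (m ++ [a])).flatMap g := by
    simp [hba]
  rw [flatMap_cons, hba, cons_append, chain_coe_cons, chain_coe_cons, ← cons_append, hclose,
    hunfold, isChain_flatMap_iff hg]
  simp [hR]

end Cycle

namespace List

variable {A B C : Type*}

def markedCode (f : A → List B) (ι : C → B) (ps : List (A × C)) : List B :=
  ps.flatMap fun p => f p.1 ++ [ι p.2]

variable {f : A → List B} {ι : C → B}

@[simp]
theorem markedCode_nil : markedCode f ι [] = [] := rfl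

@[simp]
theorem markedCode_cons (p : A × C) (ps : List (A × C)) :
    markedCode f ι (p :: ps) = f p.1 ++ ι p.2 :: markedCode f ι ps := by
  simp [markedCode]

theorem markedCode_append (ps qs : List (A × C)) :
    markedCode f ι (ps ++ qs) = markedCode f ι ps ++ markedCode f ι qs :=
  flatMap_append

theorem markedCode_flatten_replicate (n : ℕ) (ps : List (A × C)) :
    markedCode f ι (replicate n ps).flatten = (replicate n (markedCode f ι ps)).flatten :=
  flatMap_flatten_replicate _ _ _

theorem getLast?_markedCode_mem_range (ps : List (A × C)) :
    ∀ x ∈ (markedCode f ι ps).getLast?, x ∈ Set.range ι := by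
  rcases eq_nil_or_concat ps with rfl | ⟨qs, p, rfl⟩
  · simp
  · simp [markedCode]

theorem markedCode_injective (hf : Injective f) (hι : Injective ι)
    (hfι : ∀ a c, ι c ∉ f a) : Injective (markedCode f ι) := by
  intro ps qs h
  induction ps generalizing qs with
  | nil =>
    cases qs with
    | nil => rfl
    | cons q qs => simp at h
  | cons p ps ih =>
    cases qs with
    | nil => simp at h
    | cons q qs =>
      simp only [markedCode_cons] at h
      obtain ⟨h₁, h₂, h₃⟩ := append_cons_inj_of_forall_not (p := (· ∈ Set.range ι)) h
        ⟨_, rfl⟩ ⟨_, rfl⟩ (fun _ hy ⟨c, hc⟩ => hfι _ c (hc ▸ hy))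
        (fun _ hy ⟨c, hc⟩ => hfι _ c (hc ▸ hy))
      rw [Prod.ext (hf h₁) (hι h₂), ih h₃]

theorem exists_markedCode_take_eq (hfι : ∀ a c, ι c ∉ f a) {ps : List (A × C)}
    {X Y : List B} (h : markedCode f ι ps = X ++ Y)
    (hX : ∀ x ∈ X.getLast?, x ∈ Set.range ι) :
    ∃ j ≤ ps.length, X = markedCode f ι (ps.take j) ∧ Y = markedCode f ι (ps.drop j) := by
  induction ps generalizing X with
  | nil => exact ⟨0, by simp_all [eq_comm]⟩
  | cons p ps ih =>
    rcases eq_or_ne X [] with rfl | hXne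
    · exact ⟨0, by simp_all⟩
    rw [markedCode_cons, ← singleton_append, ← append_assoc, append_eq_append_iff] at h
    rcases h with ⟨X', rfl, hX'⟩ | ⟨c', hc', rfl⟩
    · obtain ⟨j, hj, rfl, rfl⟩ := ih hX' fun x hx => hX x (mem_getLast?_append_of_mem_getLast? hx)
      exact ⟨j + 1, by simpa using hj, by simp⟩
    · rcases eq_or_ne c' [] with rfl | hc'ne
      · exact ⟨1, by simp_all⟩
      obtain ⟨c, hc⟩ := hX _ (getLast?_eq_some_getLast hXne)
      have hpre : X ++ c'.dropLast = f p.1 := by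
        simpa [dropLast_append_of_ne_nil hc'ne] using congrArg dropLast hc'.symm
      exact absurd (hpre ▸ mem_append_left _ (hc ▸ getLast_mem hXne)) (hfι p.1 c)

theorem isRotated_markedCode_iff (hf : Injective f) (hι : Injective ι)
    (hfι : ∀ a c, ι c ∉ f a) {ps qs : List (A × C)} :
    markedCode f ι ps ~r markedCode f ι qs ↔ ps ~r qs := by
  refine ⟨fun h => ?_, fun h => h.flatMap _⟩
  obtain ⟨k, hk, hrot⟩ := isRotated_iff_mod.1 h
  rw [rotate_eq_drop_append_take hk] at hrot
  -- the rotation cuts the code word just after a marker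
  have hmarker : ∀ x ∈ ((markedCode f ι ps).take k).getLast?, x ∈ Set.range ι := by
    intro x hx
    refine getLast?_markedCode_mem_range (f := f) qs x ?_
    rw [← hrot]
    exact mem_getLast?_append_of_mem_getLast? hx
  obtain ⟨j, hj, htake, hdrop⟩ :=
    exists_markedCode_take_eq hfι (take_append_drop k _).symm hmarker
  refine ⟨j, markedCode_injective hf hι hfι ?_⟩
  rw [← hrot, htake, hdrop, ← markedCode_append, rotate_eq_drop_append_take hj]

def pairsToSum (ps : List (A × C)) : List (A ⊕ C) :=
  ps.flatMap fun p => [Sum.inl p.1, Sum.inr p.2]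

theorem flatMap_sumElim_pairsToSum (ps : List (A × C)) :
    (pairsToSum ps).flatMap (Sum.elim f fun c => [ι c]) = markedCode f ι ps := by
  simp [pairsToSum, markedCode, flatMap_assoc]

theorem exists_eq_pairsToSum : ∀ {l : List (A ⊕ C)},
    IsChain (fun x y => x.isLeft ≠ y.isLeft) l → (∀ x ∈ l.head?, x.isLeft) →
      (∀ x ∈ l.getLast?, x.isRight) → ∃ ps, l = pairsToSum ps
  | [], _, _, _ => ⟨[], rfl⟩
  | [x], _, hhead, hlast => by cases x <;> simp_all
  | Sum.inr _ :: _, _, hhead, _ => by simp at hhead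
  | Sum.inl _ :: Sum.inl _ :: _, hch, _, _ => by simp at hch
  | Sum.inl a :: Sum.inr c :: t, hch, _, hlast => by
    obtain ⟨ps, rfl⟩ := exists_eq_pairsToSum hch.tail.tail
      (fun y hy => by simpa using (isChain_cons.1 hch.tail).1 y hy)
      (fun x hx => hlast x (mem_getLast?_cons (mem_getLast?_cons hx)))
    exact ⟨(a, c) :: ps, rfl⟩

theorem exists_isRotated_pairsToSum {l : List (A ⊕ C)} (hl : l ≠ [])
    (h : Cycle.Chain (fun x y => x.isLeft ≠ y.isLeft) (l : Cycle (A ⊕ C))) :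
    ∃ ps, ps ≠ [] ∧ l ~r pairsToSum ps := by
  obtain ⟨c, hc⟩ : ∃ c, Sum.inr c ∈ l := by
    have hwrap := ((Cycle.chain_coe_iff_of_ne_nil hl).1 h).2
    rcases hlast : l.getLast hl with a | c
    · rcases hhead : l.head hl with a' | c
      · rw [hlast, hhead] at hwrap
        exact absurd rfl hwrap
      · exact ⟨c, hhead ▸ head_mem hl⟩
    · exact ⟨c, hlast ▸ getLast_mem hl⟩
  obtain ⟨l', hll', hlast'⟩ := exists_isRotated_getLast?_eq hc
  have hl'ne : l' ≠ [] := by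
    rintro rfl
    simp at hlast'
  obtain ⟨hch, hwrap⟩ := (Cycle.chain_coe_iff_of_ne_nil hl'ne).1 (Cycle.coe_eq_coe.2 hll' ▸ h)
  rw [getLast?_eq_some_getLast hl'ne, Option.some_inj] at hlast'
  rw [hlast'] at hwrap
  obtain ⟨ps, rfl⟩ := exists_eq_pairsToSum hch
    (fun x hx => by
      rw [head?_eq_some_head hl'ne, Option.mem_def, Option.some_inj] at hx
      subst hx
      simpa using hwrap)
    (fun x hx => by
      rw [getLast?_eq_some_getLast hl'ne, hlast', Option.mem_def, Option.some_inj] at hx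
      simp [← hx])
  exact ⟨ps, by rintro rfl; exact hl'ne rfl, hll'⟩

end List

namespace EGraph.PrimitiveList

variable {α β : Type*} {l : List α}

theorem ne_nil (hl : PrimitiveList l) : l ≠ [] := by
  rintro rfl
  exact absurd (hl 0 [] rfl) zero_ne_one

theorem of_isRotated (hl : PrimitiveList l) {l' : List α} (h : l ~r l') : PrimitiveList l' := by
  intro n r hr
  obtain ⟨k, hk⟩ := h.symm
  exact hl n (r.rotate k) (by rw [← hk, hr, rotate_flatten_replicate])

theorem map {f : α → β} (hf : Injective f) (hl : PrimitiveList l) : PrimitiveList (l.map f) := by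
  intro n r hr
  obtain ⟨a, -⟩ := exists_mem_of_ne_nil l hl.ne_nil
  have : Nonempty α := ⟨a⟩
  refine hl n (r.map (invFun f)) ?_
  rw [← map_replicate, ← map_flatten, ← hr, map_map, invFun_comp hf, map_id]

theorem of_map {f : α → β} (hl : PrimitiveList (l.map f)) : PrimitiveList l :=
  fun n r hr => hl n (r.map f) (by rw [hr, map_flatten, map_replicate])

theorem of_flatMap {g : α → List β} (hl : PrimitiveList (l.flatMap g)) : PrimitiveList l :=
  fun n r hr => hl n (r.flatMap g) (by rw [hr, flatMap_flatten_replicate])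

variable {A B C : Type*} {f : A → List B} {ι : C → B}

theorem markedCode (hf : Injective f) (hι : Injective ι) (hfι : ∀ a c, ι c ∉ f a)
    {ps : List (A × C)} (hp : PrimitiveList ps) : PrimitiveList (List.markedCode f ι ps) := by
  intro n r hr
  rcases n with _ | m
  · exact absurd (markedCode_injective hf hι hfι (hr.trans markedCode_nil.symm)) hp.ne_nil
  have hlast : ∀ x ∈ r.getLast?, x ∈ Set.range ι := by
    intro x hx
    refine getLast?_markedCode_mem_range (f := f) ps x ?_
    rw [hr, replicate_succ', flatten_append]
    exact mem_getLast?_append_of_mem_getLast? (by simpa using hx)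
  -- the period `r` ends with a marker, so it is the code of a prefix of `ps`
  obtain ⟨j, -, hrj, -⟩ := exists_markedCode_take_eq hfι
    (by rw [hr, replicate_succ, flatten_cons]) hlast
  refine hp (m + 1) (ps.take j) (markedCode_injective hf hι hfι ?_)
  rw [hr, hrj, markedCode_flatten_replicate]

end EGraph.PrimitiveList

namespace EGraph

section Circuits

variable {V : Type} {G H G' H' : EGraph V}

def AltStep (G H : EGraph V) (e f : G.E ⊕ H.E) : Prop :=
  ptgt G H e = psrc G H f ∧ e.isLeft ≠ f.isLeft

def IsOneCycleList (G H : EGraph V) (l : List (G.E ⊕ H.E)) : Prop :=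
  Cycle.Chain (AltStep G H) (l : Cycle (G.E ⊕ H.E)) ∧ PrimitiveList l

theorem IsOneCycleList.of_isRotated {l l' : List (G.E ⊕ H.E)} (hl : IsOneCycleList G H l)
    (h : l ~r l') : IsOneCycleList G H l' :=
  ⟨Cycle.coe_eq_coe.2 h ▸ hl.1, hl.2.of_isRotated h⟩

theorem AltPath.isOneCycle_iff (p : AltPath G H) : p.IsOneCycle ↔ IsOneCycleList G H p.edges := by
  rw [IsOneCycleList, Cycle.chain_coe_iff_of_ne_nil p.ne]
  exact and_congr_left' ⟨fun h => ⟨p.chain, h⟩, fun h => h.2⟩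

def mkCirc (l : List (G.E ⊕ H.E)) (hl : IsOneCycleList G H l) : Circ G H :=
  have hne := hl.2.ne_nil
  have hcyc := (Cycle.chain_coe_iff_of_ne_nil hne).1 hl.1
  Quotient.mk _ ⟨⟨l, hne, hcyc.1⟩, hcyc.2, hl.2⟩

theorem mkCirc_eq_mkCirc_iff {l l' : List (G.E ⊕ H.E)} {hl : IsOneCycleList G H l}
    {hl' : IsOneCycleList G H l'} : mkCirc l hl = mkCirc l' hl' ↔ l ~r l' :=
  Quotient.eq.trans (exists_congr fun _ => eq_comm)

theorem Circ.exists_eq_mkCirc (c : Circ G H) : ∃ l hl, c = mkCirc l hl := by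
  obtain ⟨⟨p, hp⟩, rfl⟩ := Quotient.exists_rep c
  exact ⟨p.edges, p.isOneCycle_iff.1 hp, rfl⟩

def Circ.map (φ : List (G.E ⊕ H.E) → List (G'.E ⊕ H'.E))
    (hφ : ∀ l, IsOneCycleList G H l → IsOneCycleList G' H' (φ l))
    (hrot : ∀ l l', l ~r l' → φ l ~r φ l') : Circ G H → Circ G' H' :=
  Quotient.lift (fun p => mkCirc (φ p.1.edges) (hφ _ (p.1.isOneCycle_iff.1 p.2)))
    fun _ _ h => mkCirc_eq_mkCirc_iff.2 (hrot _ _ (h.imp fun _ => Eq.symm))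

variable {φ : List (G.E ⊕ H.E) → List (G'.E ⊕ H'.E)}
  {hφ : ∀ l, IsOneCycleList G H l → IsOneCycleList G' H' (φ l)}
  {hrot : ∀ l l', l ~r l' → φ l ~r φ l'}

@[simp]
theorem Circ.map_mkCirc (l : List (G.E ⊕ H.E)) (hl : IsOneCycleList G H l) :
    Circ.map φ hφ hrot (mkCirc l hl) = mkCirc (φ l) (hφ l hl) :=
  rfl

theorem Circ.map_injective
    (hinj : ∀ l l', IsOneCycleList G H l → IsOneCycleList G H l' → φ l ~r φ l' → l ~r l') :
    Injective (Circ.map φ hφ hrot) := by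
  intro c c' h
  obtain ⟨l, hl, rfl⟩ := c.exists_eq_mkCirc
  obtain ⟨l', hl', rfl⟩ := c'.exists_eq_mkCirc
  rw [Circ.map_mkCirc, Circ.map_mkCirc, mkCirc_eq_mkCirc_iff] at h
  exact mkCirc_eq_mkCirc_iff.2 (hinj l l' hl hl' h)

end Circuits

section Reduction

variable {V : Type} [DecidableEq V] {F G H : EGraph V}

def embedEdge (F G H : EGraph V) : F.E ⊕ G.E → F.E ⊕ (union G H).E :=
  Sum.map id Sum.inl

def hEdge (F G : EGraph V) {H : EGraph V} (h : H.E) : F.E ⊕ (union G H).E :=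
  Sum.inr (Sum.inr h)

theorem embedEdge_injective : Injective (embedEdge F G H) :=
  Sum.map_injective.2 ⟨injective_id, Sum.inl_injective⟩

theorem hEdge_injective : Injective (hEdge F G (H := H)) :=
  Sum.inr_injective.comp Sum.inr_injective

theorem embedEdge_ne_hEdge (e : F.E ⊕ G.E) (h : H.E) : embedEdge F G H e ≠ hEdge F G h := by
  rcases e with _ | _ <;> rintro ⟨⟩

@[simp]
theorem isLeft_hEdge (h : H.E) : (hEdge F G h).isLeft = false :=
  rfl

theorem mem_range_embedEdge_of_notMem_range_hEdge {x : F.E ⊕ (union G H).E}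
    (hx : x ∉ Set.range (hEdge F G)) : x ∈ Set.range (embedEdge F G H) := by
  rcases x with e | e | h
  · exact ⟨Sum.inl e, rfl⟩
  · exact ⟨Sum.inr e, rfl⟩
  · exact absurd ⟨h, rfl⟩ hx

@[simp]
theorem psrc_embedEdge (e : F.E ⊕ G.E) :
    psrc F (union G H) (embedEdge F G H e) = psrc F G e := by
  rcases e with _ | _ <;> rfl

@[simp]
theorem ptgt_embedEdge (e : F.E ⊕ G.E) :
    ptgt F (union G H) (embedEdge F G H e) = ptgt F G e := by
  rcases e with _ | _ <;> rfl

@[simp]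
theorem isLeft_embedEdge (e : F.E ⊕ G.E) : (embedEdge F G H e).isLeft = e.isLeft := by
  rcases e with _ | _ <;> rfl

theorem altStep_embedEdge_iff {e e' : F.E ⊕ G.E} :
    AltStep F (union G H) (embedEdge F G H e) (embedEdge F G H e') ↔ AltStep F G e e' := by
  simp [AltStep]

theorem cycleChain_map_embedEdge_iff (l : List (F.E ⊕ G.E)) :
    Cycle.Chain (AltStep F (union G H)) (l.map (embedEdge F G H) : Cycle _) ↔
      Cycle.Chain (AltStep F G) (l : Cycle _) := by
  rw [← Cycle.map_coe, Cycle.chain_map]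
  simp only [altStep_embedEdge_iff]

theorem exists_map_embedEdge_eq {l : List (F.E ⊕ (union G H).E)}
    (hnotH : ∀ x ∈ l, x ∉ Set.range (hEdge F G)) :
    ∃ l' : List (F.E ⊕ G.E), l'.map (embedEdge F G H) = l := by
  rw [← Set.mem_range, Set.range_list_map]
  exact fun x hx => mem_range_embedEdge_of_notMem_range_hEdge (hnotH x hx)

theorem IsOneCycleList.map_embedEdge {l : List (F.E ⊕ G.E)} (hl : IsOneCycleList F G l) :
    IsOneCycleList F (union G H) (l.map (embedEdge F G H)) :=
  ⟨(cycleChain_map_embedEdge_iff l).2 hl.1, hl.2.map embedEdge_injective⟩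

theorem IsOneCycleList.exists_map_embedEdge_eq {l : List (F.E ⊕ (union G H).E)}
    (hl : IsOneCycleList F (union G H) l) (hnotH : ∀ x ∈ l, x ∉ Set.range (hEdge F G)) :
    ∃ l', IsOneCycleList F G l' ∧ l'.map (embedEdge F G H) = l := by
  obtain ⟨l', rfl⟩ := EGraph.exists_map_embedEdge_eq hnotH
  exact ⟨l', ⟨(cycleChain_map_embedEdge_iff l').1 hl.1, hl.2.of_map⟩, rfl⟩

theorem isLeft_of_psrc_mem_symmDiff (hGF : G.verts ⊆ F.verts) {e : F.E ⊕ G.E}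
    (he : psrc F G e ∈ symmDiff F.verts G.verts) : e.isLeft := by
  rcases e with _ | g
  · rfl
  · have := G.src_mem g
    simp_all [psrc, Finset.mem_symmDiff, hGF this]

theorem isLeft_of_ptgt_mem_symmDiff (hGF : G.verts ⊆ F.verts) {e : F.E ⊕ G.E}
    (he : ptgt F G e ∈ symmDiff F.verts G.verts) : e.isLeft := by
  rcases e with _ | g
  · rfl
  · have := G.tgt_mem g
    simp_all [ptgt, Finset.mem_symmDiff, hGF this]

def reductPath (F G H : EGraph V) (P : (reduct F G).E) : List (F.E ⊕ (union G H).E) :=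
  P.1.edges.map (embedEdge F G H)

def expandEdge (F G H : EGraph V) : (reduct F G).E ⊕ H.E → List (F.E ⊕ (union G H).E) :=
  Sum.elim (reductPath F G H) fun h => [hEdge F G h]

theorem reductPath_injective : Injective (reductPath F G H) := by
  intro P Q h
  obtain ⟨⟨l, _, _⟩, _⟩ := P
  obtain ⟨⟨l', _, _⟩, _⟩ := Q
  obtain rfl : l = l' := map_injective_iff.2 embedEdge_injective h
  rfl

theorem hEdge_notMem_reductPath (P : (reduct F G).E) (h : H.E) :
    hEdge F G h ∉ reductPath F G H P := by
  simp only [reductPath, mem_map, not_exists, not_and]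
  exact fun e _ => embedEdge_ne_hEdge e h

theorem expandEdge_ne_nil (x : (reduct F G).E ⊕ H.E) : expandEdge F G H x ≠ [] := by
  rcases x with P | h
  · simpa [expandEdge, reductPath] using P.1.ne
  · simp [expandEdge]

theorem isChain_expandEdge (x : (reduct F G).E ⊕ H.E) :
    IsChain (AltStep F (union G H)) (expandEdge F G H x) := by
  rcases x with P | h
  · exact (isChain_map _).2 (P.1.chain.imp fun _ _ => altStep_embedEdge_iff.2)
  · exact .singleton _

/-- An edge of `F ∷ G` starts and ends with an edge of `F`, since its endpoints lie
outside `V_G`. -/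
theorem head?_expandEdge (hGF : G.verts ⊆ F.verts) (x : (reduct F G).E ⊕ H.E) :
    ∃ e, (expandEdge F G H x).head? = some e ∧
      psrc F (union G H) e = psrc (reduct F G) H x ∧ e.isLeft = x.isLeft := by
  rcases x with P | h
  · refine ⟨embedEdge F G H (P.1.edges.head P.1.ne), by
      simp [expandEdge, reductPath, head?_eq_some_head P.1.ne], psrc_embedEdge _, ?_⟩
    simpa using isLeft_of_psrc_mem_symmDiff hGF P.2.1
  · exact ⟨_, rfl, rfl, rfl⟩

theorem getLast?_expandEdge (hGF : G.verts ⊆ F.verts) (x : (reduct F G).E ⊕ H.E) :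
    ∃ e, (expandEdge F G H x).getLast? = some e ∧
      ptgt F (union G H) e = ptgt (reduct F G) H x ∧ e.isLeft = x.isLeft := by
  rcases x with P | h
  · refine ⟨embedEdge F G H (P.1.edges.getLast P.1.ne), by
      simp [expandEdge, reductPath, getLast?_eq_some_getLast P.1.ne], ptgt_embedEdge _, ?_⟩
    simpa using isLeft_of_ptgt_mem_symmDiff hGF P.2.2
  · exact ⟨_, rfl, rfl, rfl⟩

theorem expandEdge_junction_iff (hGF : G.verts ⊆ F.verts) (x y : (reduct F G).E ⊕ H.E) :
    (∀ e ∈ (expandEdge F G H x).getLast?, ∀ e' ∈ (expandEdge F G H y).head?,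
      AltStep F (union G H) e e') ↔ AltStep (reduct F G) H x y := by
  obtain ⟨e, he, htgt, hcol⟩ := getLast?_expandEdge hGF x
  obtain ⟨e', he', hsrc, hcol'⟩ := head?_expandEdge hGF y
  simp [he, he', AltStep, htgt, hsrc, hcol, hcol']

theorem cycleChain_flatMap_expandEdge_iff (hGF : G.verts ⊆ F.verts)
    (lq : List ((reduct F G).E ⊕ H.E)) :
    Cycle.Chain (AltStep F (union G H)) (lq.flatMap (expandEdge F G H) : Cycle _) ↔
      Cycle.Chain (AltStep (reduct F G) H) (lq : Cycle _) := by
  rw [Cycle.chain_coe_flatMap expandEdge_ne_nil isChain_expandEdge]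
  simp only [expandEdge_junction_iff hGF]

theorem flatMap_expandEdge_pairsToSum (ps : List ((reduct F G).E × H.E)) :
    (pairsToSum ps).flatMap (expandEdge F G H) = markedCode (reductPath F G H) (hEdge F G) ps :=
  flatMap_sumElim_pairsToSum ps

theorem IsOneCycleList.exists_isRotated_pairsToSum {lq : List ((reduct F G).E ⊕ H.E)}
    (hlq : IsOneCycleList (reduct F G) H lq) : ∃ ps, ps ≠ [] ∧ lq ~r pairsToSum ps :=
  List.exists_isRotated_pairsToSum hlq.2.ne_nil (hlq.1.imp fun _ _ h => h.2)

theorem IsOneCycleList.flatMap_expandEdge (hGF : G.verts ⊆ F.verts)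
    {lq : List ((reduct F G).E ⊕ H.E)} (hlq : IsOneCycleList (reduct F G) H lq) :
    IsOneCycleList F (union G H) (lq.flatMap (expandEdge F G H)) := by
  refine ⟨(cycleChain_flatMap_expandEdge_iff hGF lq).2 hlq.1, ?_⟩
  obtain ⟨ps, -, hrot⟩ := hlq.exists_isRotated_pairsToSum
  have hps : PrimitiveList ps := (hlq.2.of_isRotated hrot).of_flatMap
  have hcode := hps.markedCode reductPath_injective hEdge_injective hEdge_notMem_reductPath
  rw [← flatMap_expandEdge_pairsToSum] at hcode
  exact hcode.of_isRotated (hrot.flatMap _).symm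

theorem IsOneCycleList.isRotated_of_flatMap_expandEdge {lq lq' : List ((reduct F G).E ⊕ H.E)}
    (hlq : IsOneCycleList (reduct F G) H lq) (hlq' : IsOneCycleList (reduct F G) H lq')
    (h : lq.flatMap (expandEdge F G H) ~r lq'.flatMap (expandEdge F G H)) : lq ~r lq' := by
  obtain ⟨ps, -, hps⟩ := hlq.exists_isRotated_pairsToSum
  obtain ⟨ps', -, hps'⟩ := hlq'.exists_isRotated_pairsToSum
  have hcode : markedCode (reductPath F G H) (hEdge F G) ps ~r
      markedCode (reductPath F G H) (hEdge F G) ps' := by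
    rw [← flatMap_expandEdge_pairsToSum, ← flatMap_expandEdge_pairsToSum]
    exact ((hps.flatMap _).symm.trans h).trans (hps'.flatMap _)
  have hpairs := (isRotated_markedCode_iff reductPath_injective hEdge_injective
    hEdge_notMem_reductPath).1 hcode
  exact (hps.trans (hpairs.flatMap _)).trans hps'.symm

theorem IsOneCycleList.exists_hEdge_mem_flatMap_expandEdge {lq : List ((reduct F G).E ⊕ H.E)}
    (hlq : IsOneCycleList (reduct F G) H lq) :
    ∃ h, hEdge F G h ∈ lq.flatMap (expandEdge F G H) := by
  obtain ⟨ps, hne, hps⟩ := hlq.exists_isRotated_pairsToSum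
  obtain ⟨p, ps, rfl⟩ := exists_cons_of_ne_nil hne
  refine ⟨p.2, (hps.flatMap _).mem_iff.2 ?_⟩
  simp [flatMap_expandEdge_pairsToSum]

theorem exists_reductPath_eq (hH : H.verts ⊆ symmDiff F.verts G.verts)
    {s : List (F.E ⊕ (union G H).E)} (hs : s ≠ []) (hnotH : ∀ x ∈ s, x ∉ Set.range (hEdge F G))
    (hch : IsChain (AltStep F (union G H)) s)
    (hsrc : psrc F (union G H) (s.head hs) ∈ H.verts)
    (htgt : ptgt F (union G H) (s.getLast hs) ∈ H.verts) : ∃ P, reductPath F G H P = s := by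
  obtain ⟨s, rfl⟩ := exists_map_embedEdge_eq hnotH
  have hs' : s ≠ [] := by simpa using hs
  rw [head_map, psrc_embedEdge] at hsrc
  rw [getLast_map, ptgt_embedEdge] at htgt
  have hch' : IsChain (AltStep F G) s := (isChain_map _).1 hch |>.imp fun _ _ =>
    altStep_embedEdge_iff.1
  exact ⟨⟨⟨s, hs', hch'⟩, hH hsrc, hH htgt⟩, rfl⟩

/-- Cutting an alternating path after each `H`-edge: the pieces between `H`-edges are
alternating paths of `F □ G` from `V_H` to `V_H ⊆ V_F ∖ V_G`, i.e. edges of `F ∷ G`. -/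
theorem exists_markedCode_reductPath_eq (hH : H.verts ⊆ symmDiff F.verts G.verts)
    (l : List (F.E ⊕ (union G H).E)) (hch : IsChain (AltStep F (union G H)) l)
    (hhead : ∀ x ∈ l.head?, x.isLeft ∧ psrc F (union G H) x ∈ H.verts)
    (hlast : ∀ x ∈ l.getLast?, x ∈ Set.range (hEdge F G)) :
    ∃ ps, markedCode (reductPath F G H) (hEdge F G) ps = l := by
  induction hn : l.length using Nat.strong_induction_on generalizing l with
  | _ n ih =>
    rcases eq_or_ne l [] with rfl | hne
    · exact ⟨[], rfl⟩
    obtain ⟨s, _, t, rfl, ⟨h, rfl⟩, hs⟩ := exists_append_cons_of_exists_mem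
      ⟨_, getLast_mem hne, hlast _ (getLast?_eq_some_getLast hne)⟩
    have hsne : s ≠ [] := by
      rintro rfl
      simpa using (hhead _ rfl).1
    have hjunction := hch.rel_getLast_head_of_append hsne (cons_ne_nil _ _)
    obtain ⟨P, hP⟩ := exists_reductPath_eq hH hsne hs hch.left_of_append
      (by simpa [head_append_of_ne_nil hsne] using (hhead _ (head?_eq_some_head hne)).2)
      (hjunction.1 ▸ H.src_mem h)
    have hstep := isChain_cons.1 hch.right_of_append
    have hlen : t.length < n := by
      simp only [← hn, length_append, length_cons]
      omega
    obtain ⟨ps, hps⟩ := ih t.length hlen t hstep.2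
      (fun y hy => ⟨by simpa using ((hstep.1 y hy).2).symm, (hstep.1 y hy).1 ▸ H.tgt_mem h⟩)
      (fun y hy => hlast y (mem_getLast?_append_of_mem_getLast? (mem_getLast?_cons hy))) rfl
    exact ⟨(P, h) :: ps, by simp [hP, hps]⟩

theorem IsOneCycleList.exists_flatMap_expandEdge_isRotated (hGF : G.verts ⊆ F.verts)
    (hH : H.verts ⊆ symmDiff F.verts G.verts) {l : List (F.E ⊕ (union G H).E)}
    (hl : IsOneCycleList F (union G H) l) {h : H.E} (hh : hEdge F G h ∈ l) :
    ∃ lq, IsOneCycleList (reduct F G) H lq ∧ lq.flatMap (expandEdge F G H) ~r l := by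
  obtain ⟨l', hll', hlast⟩ := exists_isRotated_getLast?_eq hh
  have hl' := hl.of_isRotated hll'
  have hne := hl'.2.ne_nil
  obtain ⟨hch, hwrap⟩ := (Cycle.chain_coe_iff_of_ne_nil hne).1 hl'.1
  rw [getLast?_eq_some_getLast hne, Option.some_inj] at hlast
  rw [hlast] at hwrap
  obtain ⟨ps, hps⟩ := exists_markedCode_reductPath_eq hH l' hch
    (fun x hx => by
      rw [head?_eq_some_head hne, Option.mem_def, Option.some_inj] at hx
      subst hx
      exact ⟨by simpa using hwrap.2.symm, hwrap.1 ▸ H.tgt_mem h⟩)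
    (fun x hx => by
      rw [getLast?_eq_some_getLast hne, hlast, Option.mem_def, Option.some_inj] at hx
      exact ⟨h, hx⟩)
  rw [← flatMap_expandEdge_pairsToSum] at hps
  refine ⟨pairsToSum ps, ⟨?_, ?_⟩, hps ▸ hll'.symm⟩
  · rw [← cycleChain_flatMap_expandEdge_iff hGF, hps]
    exact hl'.1
  · exact (hps ▸ hl'.2 : PrimitiveList _).of_flatMap

def Circ.embed (F G H : EGraph V) : Circ F G → Circ F (union G H) :=
  Circ.map (·.map (embedEdge F G H)) (fun _ hl => hl.map_embedEdge) fun _ _ h => h.map _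

noncomputable def Circ.expand (F G H : EGraph V) (hGF : G.verts ⊆ F.verts) :
    Circ (reduct F G) H → Circ F (union G H) :=
  Circ.map (·.flatMap (expandEdge F G H)) (fun _ hlq => hlq.flatMap_expandEdge hGF)
    fun _ _ h => h.flatMap _

@[simp]
theorem Circ.embed_mkCirc (l : List (F.E ⊕ G.E)) (hl : IsOneCycleList F G l) :
    Circ.embed F G H (mkCirc l hl) = mkCirc _ hl.map_embedEdge :=
  rfl

@[simp]
theorem Circ.expand_mkCirc (hGF : G.verts ⊆ F.verts) (lq : List ((reduct F G).E ⊕ H.E))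
    (hlq : IsOneCycleList (reduct F G) H lq) :
    Circ.expand F G H hGF (mkCirc lq hlq) = mkCirc _ (hlq.flatMap_expandEdge hGF) :=
  rfl

theorem Circ.embed_injective : Injective (Circ.embed F G H) :=
  Circ.map_injective fun _ _ _ _ => (isRotated_map_iff embedEdge_injective).1

theorem Circ.expand_injective (hGF : G.verts ⊆ F.verts) : Injective (Circ.expand F G H hGF) :=
  Circ.map_injective fun _ _ hlq hlq' => hlq.isRotated_of_flatMap_expandEdge hlq'

theorem Circ.embed_ne_expand (hGF : G.verts ⊆ F.verts) (c : Circ F G)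
    (c' : Circ (reduct F G) H) : Circ.embed F G H c ≠ Circ.expand F G H hGF c' := by
  obtain ⟨l, hl, rfl⟩ := c.exists_eq_mkCirc
  obtain ⟨lq, hlq, rfl⟩ := c'.exists_eq_mkCirc
  rw [Circ.embed_mkCirc, Circ.expand_mkCirc, Ne, mkCirc_eq_mkCirc_iff]
  intro hrot
  obtain ⟨h, hmem⟩ := hlq.exists_hEdge_mem_flatMap_expandEdge
  obtain ⟨e, -, he⟩ := mem_map.1 (hrot.mem_iff.2 hmem)
  exact embedEdge_ne_hEdge e h he

theorem Circ.exists_embed_or_expand_eq (hGF : G.verts ⊆ F.verts)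
    (hH : H.verts ⊆ symmDiff F.verts G.verts) (c : Circ F (union G H)) :
    (∃ c', Circ.embed F G H c' = c) ∨ ∃ c', Circ.expand F G H hGF c' = c := by
  obtain ⟨l, hl, rfl⟩ := c.exists_eq_mkCirc
  by_cases hhas : ∃ x ∈ l, x ∈ Set.range (hEdge F G)
  · obtain ⟨_, hx, h, rfl⟩ := hhas
    obtain ⟨lq, hlq, hrot⟩ := hl.exists_flatMap_expandEdge_isRotated hGF hH hx
    exact .inr ⟨mkCirc lq hlq, by rw [Circ.expand_mkCirc, mkCirc_eq_mkCirc_iff]; exact hrot⟩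
  · push Not at hhas
    obtain ⟨l', hl', rfl⟩ := hl.exists_map_embedEdge_eq hhas
    exact .inl ⟨mkCirc l' hl', rfl⟩

noncomputable def circUnionEquiv (hGF : G.verts ⊆ F.verts)
    (hH : H.verts ⊆ symmDiff F.verts G.verts) :
    Circ F G ⊕ Circ (reduct F G) H ≃ Circ F (union G H) :=
  Equiv.ofBijective (Sum.elim (Circ.embed F G H) (Circ.expand F G H hGF))
    ⟨Circ.embed_injective.sumElim (Circ.expand_injective hGF) (Circ.embed_ne_expand hGF),
      fun c => (Circ.exists_embed_or_expand_eq hGF hH c).elim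
        (fun ⟨c', hc'⟩ => ⟨.inl c', hc'⟩) fun ⟨c', hc'⟩ => ⟨.inr c', hc'⟩⟩

end Reduction

end EGraph

open EGraph

theorem stmt3_general {V : Type} [DecidableEq V] (F G H : EGraph V)
    (hGH : G.verts ∩ H.verts = ∅) (hsub : G.verts ∪ H.verts ⊆ F.verts) :
    Cardinal.mk (Circ F (union G H)) =
      Cardinal.mk (Circ F G) + Cardinal.mk (Circ (reduct F G) H) := by
  have hGF : G.verts ⊆ F.verts := Finset.union_subset_left hsub
  have hH : H.verts ⊆ symmDiff F.verts G.verts := fun v hv =>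
    Finset.mem_symmDiff.2 <| .inl ⟨hsub (Finset.mem_union_right _ hv),
      fun hvG => Finset.disjoint_left.1 (Finset.disjoint_iff_inter_eq_empty.2 hGH) hvG hv⟩
  rw [Cardinal.add_def]
  exact (Cardinal.mk_congr (circUnionEquiv hGF hH)).symm

/-- If `V_G ∩ V_H = ∅` and `V_G ∪ V_H ⊆ V_F`, the number of alternating 1-circuits
between `F` and `G ∪ H` equals the number of alternating 1-circuits between `F` and `G`
plus the number of alternating 1-circuits between `F ∷ G` and `H`. -/
theorem stmt3 {V : Type} [DecidableEq V] (F G H : EGraph V)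
    [Countable F.E] [Countable G.E] [Countable H.E]
    (hGH : G.verts ∩ H.verts = ∅) (hsub : G.verts ∪ H.verts ⊆ F.verts) :
    Cardinal.mk (Circ F (union G H)) =
      Cardinal.mk (Circ F G) + Cardinal.mk (Circ (reduct F G) H) :=
  stmt3_general F G H hGH hsub
end

section
/- For real numbers x_1, x_2 ∈ (0,1] with x_1 + x_2 ≤ 1 and y_1, …, y_l ∈ (0,1], the following identity holds: −log(1 − (x_1+x_2)^l y_1⋯y_l) = Σ over equivalence classes (modulo cyclic shift) of primitive words w in the alphabet {1,2} arranged as cycles ρ_1 e_{i_1} ρ_2 e_{i_2} … of −log(1 − weight), where the weight of the class of (i_1,…,i_{ml}) is x_{i_1}⋯x_{i_{ml}} (y_1⋯y_l)^m. Equivalently: Σ_{k≥1} ((x_1+x_2)^l y_1⋯y_l)^k / k = Σ_{primitive necklaces ν over choices of x_1, x_2 at l positions per period} Σ_{d≥1} ω(ν)^d / d. -/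
/-!
Expanding `Tⁿ = (∑ₐ c a)ⁿ` turns `∑ₙ Tⁿ / n` into `∑ w, ω(w) / |w|` over nonempty words `w`.
Every nonempty word is uniquely `u ^ d` with `u` primitive (its primitive root is the prefix
whose length is the minimal period of `w` under rotation), so this is
`∑_u ∑_d ω(u)ᵈ / (d |u|)`. A primitive word of length `m` has exactly `m` distinct rotations,
all of the same weight, so passing to necklaces absorbs the factor `1 / |u|`.
-/

open scoped ENNReal

/-- A word is primitive (a 1-cycle) when it is nonempty and not a proper power of a
shorter word. -/
def PrimitiveW {α : Type} (u : List α) : Prop :=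
  u ≠ [] ∧ ∀ (k : ℕ) (r : List α), u = (List.replicate k r).flatten → k = 1

/-- Cyclic-shift equivalence on primitive words over the alphabet of blocks of `l`
choices among `{1,2}`. -/
def neckSetoid (l : ℕ) : Setoid {u : List (Fin l → Fin 2) // PrimitiveW u} where
  r u v := ∃ k, v.1 = u.1.rotate k
  iseqv := by
    constructor
    · exact fun u => ⟨0, (u.1.rotate_zero).symm⟩
    · rintro u v ⟨k, hk⟩
      refine ⟨u.1.length * (k + 1) - k, ?_⟩
      rw [hk, List.rotate_rotate]
      rcases Nat.eq_zero_or_pos u.1.length with h0 | hpos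
      · rw [List.length_eq_zero_iff] at h0
        simp [h0]
      · have hkle : k ≤ u.1.length * (k + 1) := by nlinarith
        rw [Nat.add_sub_cancel' hkle, List.rotate_length_mul]
    · rintro u v t ⟨k, hk⟩ ⟨m, hm⟩
      exact ⟨k + m, by rw [hm, hk, List.rotate_rotate]⟩

/-- Primitive necklaces: equivalence classes of primitive words modulo cyclic shift. -/
def Necklace (l : ℕ) := Quotient (neckSetoid l)

/-- The weight of a necklace: the product over all its blocks of the chosen `x`'s,
times `(y_1 ⋯ y_l)^m` where `m` is the length of the word. -/
noncomputable def nweight (l : ℕ) (x : Fin 2 → ℝ) (y : Fin l → ℝ) : Necklace l → ℝ :=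
  Quotient.lift
    (fun u => (u.1.map (fun a => ∏ i, x (a i))).prod * (∏ j, y j) ^ u.1.length)
    (by
      rintro u v ⟨k, hk⟩
      show (u.1.map (fun a => ∏ i, x (a i))).prod * (∏ j, y j) ^ u.1.length
          = (v.1.map (fun a => ∏ i, x (a i))).prod * (∏ j, y j) ^ v.1.length
      rw [hk, List.map_rotate, List.length_rotate,
        ((u.1.map (fun a => ∏ i, x (a i))).rotate_perm k).prod_eq])


open Function List

namespace List

variable {α : Type*}

theorem iterate_rotate_one (w : List α) (n : ℕ) : (rotate · 1)^[n] w = w.rotate n := by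
  induction n generalizing w with
  | zero => simp
  | succ n ih => rw [iterate_succ_apply, ih, rotate_rotate, add_comm]

theorem isPeriodicPt_rotate_one_iff {w : List α} {n : ℕ} :
    IsPeriodicPt (rotate · 1) n w ↔ w.rotate n = w := by
  rw [IsPeriodicPt, IsFixedPt, iterate_rotate_one]

theorem mem_periodicPts_rotate_one {w : List α} (hw : w ≠ []) :
    w ∈ periodicPts (rotate · 1) :=
  mk_mem_periodicPts (length_pos_iff.2 hw) (isPeriodicPt_rotate_one_iff.2 w.rotate_length)

theorem minimalPeriod_rotate_one_dvd_length (w : List α) :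
    minimalPeriod (rotate · 1) w ∣ w.length :=
  (isPeriodicPt_rotate_one_iff.2 w.rotate_length).minimalPeriod_dvd

theorem rotate_minimalPeriod_rotate_one (w : List α) :
    w.rotate (minimalPeriod (rotate · 1) w) = w :=
  isPeriodicPt_rotate_one_iff.1 (isPeriodicPt_minimalPeriod _ w)

theorem length_flatten_replicate (u : List α) (k : ℕ) :
    (replicate k u).flatten.length = k * u.length := by
  simp

theorem flatten_replicate_flatten_replicate (u : List α) (m k : ℕ) :
    (replicate m (replicate k u).flatten).flatten = (replicate (m * k) u).flatten := by
  induction m with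
  | zero => simp
  | succ m ih => rw [replicate_succ, flatten_cons, ih, Nat.succ_mul, add_comm, replicate_add,
      flatten_append]

theorem rotate_length_flatten_replicate (u : List α) (k : ℕ) :
    (replicate k u).flatten.rotate u.length = (replicate k u).flatten := by
  cases k with
  | zero => simp
  | succ k => rw [replicate_succ, flatten_cons, rotate_append_length_eq, ← flatten_concat,
      ← replicate_succ', replicate_succ, flatten_cons]

theorem minimalPeriod_rotate_one_flatten_replicate_dvd (u : List α) (k : ℕ) :
    minimalPeriod (rotate · 1) (replicate k u).flatten ∣ u.length :=
  (isPeriodicPt_rotate_one_iff.2 (rotate_length_flatten_replicate u k)).minimalPeriod_dvd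

theorem take_mul_eq_flatten_replicate {w : List α} {p : ℕ} (h : w.rotate p = w) {k : ℕ}
    (hk : k * p ≤ w.length) : w.take (k * p) = (replicate k (w.take p)).flatten := by
  induction k with
  | zero => simp
  | succ k ih =>
    have hkp : k * p + p ≤ w.length := by rwa [← Nat.succ_mul]
    have hshift : (w.drop (k * p)).take p = w.take p := by
      have hrot : w.rotate (k * p) = w := isPeriodicPt_rotate_one_iff.1
        ((isPeriodicPt_rotate_one_iff.2 h).const_mul k)
      conv_rhs => rw [← hrot, rotate_eq_drop_append_take (by omega)]
      rw [take_append_of_le_length (by simp; omega)]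
    rw [Nat.succ_mul, take_add, ih (by omega), hshift, replicate_succ', flatten_concat]

theorem eq_flatten_replicate_of_rotate_eq {w : List α} {p : ℕ} (h : w.rotate p = w)
    (hp : p ∣ w.length) : w = (replicate (w.length / p) (w.take p)).flatten := by
  rw [← take_mul_eq_flatten_replicate h (Nat.div_mul_cancel hp).le, Nat.div_mul_cancel hp,
    take_length]

end List

theorem Nat.eq_one_of_mul_dvd_right {k n : ℕ} (hn : 0 < n) (h : k * n ∣ n) : k = 1 :=
  Nat.dvd_one.1 (Nat.dvd_of_mul_dvd_mul_right hn (by rwa [one_mul]))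

section Primitive

variable {α : Type}

theorem primitiveW_iff {u : List α} :
    PrimitiveW u ↔ u ≠ [] ∧ minimalPeriod (rotate · 1) u = u.length := by
  refine ⟨fun ⟨hne, hprim⟩ => ⟨hne, ?_⟩, fun ⟨hne, hper⟩ => ⟨hne, fun k r hu => ?_⟩⟩
  · have hdvd := minimalPeriod_rotate_one_dvd_length u
    exact Nat.eq_of_dvd_of_div_eq_one hdvd
      (hprim _ _ (eq_flatten_replicate_of_rotate_eq (rotate_minimalPeriod_rotate_one u) hdvd))
  · have hdvd := minimalPeriod_rotate_one_flatten_replicate_dvd r k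
    rw [← hu, hper, hu, length_flatten_replicate] at hdvd
    have hr : 0 < r.length := length_pos_iff.2 fun hr => hne (by simp [hu, hr])
    exact Nat.eq_one_of_mul_dvd_right hr hdvd

theorem PrimitiveW.rotate {u : List α} (hu : PrimitiveW u) (n : ℕ) :
    PrimitiveW (u.rotate n) := by
  rw [primitiveW_iff] at hu ⊢
  refine ⟨by simpa using hu.1, ?_⟩
  rw [← iterate_rotate_one, minimalPeriod_apply_iterate (mem_periodicPts_rotate_one hu.1), hu.2,
    iterate_rotate_one, length_rotate]

theorem PrimitiveW.injOn_rotate {u : List α} (hu : PrimitiveW u) :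
    Set.InjOn u.rotate (Set.Iio u.length) := by
  have hinj := iterate_injOn_Iio_minimalPeriod (f := (List.rotate · 1)) (x := u)
  simpa only [(primitiveW_iff.1 hu).2, iterate_rotate_one] using hinj

/-- The shortest `r` with `w = r ^ k`. -/
noncomputable def List.primitiveRoot (w : List α) : List α := w.take (minimalPeriod (rotate · 1) w)

theorem List.eq_flatten_replicate_primitiveRoot (w : List α) :
    w = (replicate (w.length / minimalPeriod (rotate · 1) w) w.primitiveRoot).flatten :=
  eq_flatten_replicate_of_rotate_eq (rotate_minimalPeriod_rotate_one w)
    (minimalPeriod_rotate_one_dvd_length w)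

theorem List.primitiveW_primitiveRoot {w : List α} (hw : w ≠ []) : PrimitiveW w.primitiveRoot := by
  set P := minimalPeriod (rotate · 1) w
  have hP : 0 < P := minimalPeriod_pos_of_mem_periodicPts (mem_periodicPts_rotate_one hw)
  have hlen : w.primitiveRoot.length = P := length_take_of_le
    (Nat.le_of_dvd (length_pos_iff.2 hw) (minimalPeriod_rotate_one_dvd_length w))
  refine ⟨ne_nil_of_length_pos (hlen ▸ hP), fun k r hr => ?_⟩
  have hw' : w = (replicate (w.length / P * k) r).flatten := by
    rw [← flatten_replicate_flatten_replicate, ← hr]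
    exact eq_flatten_replicate_primitiveRoot w
  have hdvd := minimalPeriod_rotate_one_flatten_replicate_dvd r (w.length / P * k)
  rw [← hw'] at hdvd
  change P ∣ r.length at hdvd
  rw [← hlen, hr, length_flatten_replicate] at hdvd hP
  exact Nat.eq_one_of_mul_dvd_right (Nat.pos_of_mul_pos_left hP) hdvd

theorem PrimitiveW.primitiveRoot_flatten_replicate {u : List α} (hu : PrimitiveW u) {k : ℕ}
    (hk : k ≠ 0) : (replicate k u).flatten.primitiveRoot = u := by
  set w := (replicate k u).flatten
  set P := minimalPeriod (List.rotate · 1) w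
  have hdvd : P ∣ u.length := minimalPeriod_rotate_one_flatten_replicate_dvd u k
  have hprefix : w.take u.length = u := by
    obtain ⟨k, rfl⟩ := Nat.exists_eq_succ_of_ne_zero hk
    exact take_left
  have hroot : u = (replicate (u.length / P) w.primitiveRoot).flatten := by
    rw [primitiveRoot, ← take_mul_eq_flatten_replicate (rotate_minimalPeriod_rotate_one w),
      Nat.div_mul_cancel hdvd, hprefix]
    rw [Nat.div_mul_cancel hdvd, ← hprefix]
    exact length_take_le' _ _
  rw [hroot, hu.2 _ _ hroot, replicate_one, flatten_singleton]

noncomputable def primitivePowEquiv : {u : List α // PrimitiveW u} × ℕ ≃ {w : List α // w ≠ []} :=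
  Equiv.ofBijective (fun p => ⟨(replicate (p.2 + 1) p.1.1).flatten, by simpa using p.1.2.1⟩) <| by
    constructor
    · rintro ⟨u, d⟩ ⟨v, e⟩ h
      have huv : u.1 = v.1 := by
        rw [← u.2.primitiveRoot_flatten_replicate d.succ_ne_zero,
          ← v.2.primitiveRoot_flatten_replicate e.succ_ne_zero]
        exact congrArg (fun w => w.1.primitiveRoot) h
      have hlen := congrArg (fun w => w.1.length) h
      simp only [length_flatten_replicate, huv] at hlen
      have hv : 0 < v.1.length := length_pos_iff.2 v.2.1
      exact Prod.ext (Subtype.ext huv) (by simpa using Nat.eq_of_mul_eq_mul_right hv hlen)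
    · rintro ⟨w, hw⟩
      have hpos : 0 < w.length / minimalPeriod (List.rotate · 1) w :=
        Nat.div_pos (Nat.le_of_dvd (length_pos_iff.2 hw) (minimalPeriod_rotate_one_dvd_length w))
          (minimalPeriod_pos_of_mem_periodicPts (mem_periodicPts_rotate_one hw))
      refine ⟨(⟨w.primitiveRoot, primitiveW_primitiveRoot hw⟩,
        w.length / minimalPeriod (List.rotate · 1) w - 1), Subtype.ext ?_⟩
      simp only [Nat.sub_add_cancel hpos]
      exact (eq_flatten_replicate_primitiveRoot w).symm

theorem primitivePowEquiv_apply_coe (p : {u : List α // PrimitiveW u} × ℕ) :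
    (primitivePowEquiv p).1 = (replicate (p.2 + 1) p.1.1).flatten :=
  rfl

end Primitive

open scoped ENNReal

/-- `∑ tⁿ / n`, the series of `-log (1 - t)`; in `ℝ≥0∞` it needs no convergence hypothesis. -/
noncomputable def negLogOneSub (t : ℝ≥0∞) : ℝ≥0∞ := ∑' d : ℕ, t ^ (d + 1) / (d + 1)

section Series

variable {A : Type} [Fintype A] (c : A → ℝ≥0∞)

theorem negLogOneSub_sum_eq_tsum_ne_nil :
    negLogOneSub (∑ a, c a) = ∑' w : {w : List A // w ≠ []}, (w.1.map c).prod / w.1.length := by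
  let g : (Σ n, Fin (n + 1) → A) → {w : List A // w ≠ []} := fun σ => ⟨ofFn σ.2, by simp⟩
  have hg : Bijective g := by
    constructor
    · rintro ⟨m, f⟩ ⟨n, f'⟩ h
      obtain ⟨rfl, hff'⟩ : m = n ∧ f ≍ f' := by simpa using ofFn_inj'.1 (congrArg Subtype.val h)
      rw [eq_of_heq hff']
    · rintro ⟨_ | ⟨a, t⟩, hw⟩
      · contradiction
      · exact ⟨⟨t.length, (a :: t).get⟩, Subtype.ext (ofFn_get (a :: t))⟩
  rw [← (Equiv.ofBijective g hg).tsum_eq, ENNReal.tsum_sigma', negLogOneSub]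
  refine tsum_congr fun n => ?_
  rw [tsum_fintype, Fintype.sum_pow, div_eq_mul_inv, Finset.sum_mul]
  refine Finset.sum_congr rfl fun f _ => ?_
  simp only [g, Equiv.ofBijective_apply, map_ofFn, prod_ofFn, length_ofFn, comp_apply,
    div_eq_mul_inv]
  norm_cast

theorem negLogOneSub_sum_eq_tsum_primitiveW :
    negLogOneSub (∑ a, c a) =
      ∑' u : {u : List A // PrimitiveW u}, negLogOneSub (u.1.map c).prod / u.1.length := by
  rw [negLogOneSub_sum_eq_tsum_ne_nil, ← primitivePowEquiv.tsum_eq, ENNReal.tsum_prod']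
  refine tsum_congr fun u => ?_
  rw [negLogOneSub, div_eq_mul_inv, ← ENNReal.tsum_mul_right]
  refine tsum_congr fun d => ?_
  simp [primitivePowEquiv_apply_coe, map_flatten, prod_flatten, ENNReal.mul_inv, div_eq_mul_inv,
    mul_assoc]

end Series

section Necklace

variable {l : ℕ}

noncomputable def rotationsEquiv (u : {u : List (Fin l → Fin 2) // PrimitiveW u}) :
    Fin u.1.length ≃ {v // (⟦v⟧ : Necklace l) = ⟦u⟧} :=
  Equiv.ofBijective
    (fun k => ⟨⟨u.1.rotate k, u.2.rotate k⟩,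
      (Quotient.sound ⟨k, rfl⟩ : (⟦u⟧ : Necklace l) = _).symm⟩)
    ⟨fun i j h => Fin.ext (u.2.injOn_rotate i.2 j.2 (congrArg (fun v => v.1.1) h)), by
      rintro ⟨v, hv⟩
      obtain ⟨k, hk⟩ := Quotient.exact hv.symm
      have hpos : 0 < u.1.length := length_pos_iff.2 u.2.1
      exact ⟨⟨k % u.1.length, Nat.mod_lt _ hpos⟩, Subtype.ext (Subtype.ext (by simp [hk]))⟩⟩

theorem rotationsEquiv_apply_coe_coe (u : {u : List (Fin l → Fin 2) // PrimitiveW u})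
    (k : Fin u.1.length) : (rotationsEquiv u k).1.1 = u.1.rotate k :=
  rfl

theorem tsum_necklace (f : Necklace l → ℝ≥0∞) :
    ∑' ν, f ν = ∑' u : {u : List (Fin l → Fin 2) // PrimitiveW u}, f ⟦u⟧ / u.1.length := by
  rw [← (Equiv.sigmaFiberEquiv (fun u => (⟦u⟧ : Necklace l))).tsum_eq, ENNReal.tsum_sigma']
  refine tsum_congr fun ν => ?_
  simp only [Equiv.sigmaFiberEquiv_apply]
  obtain ⟨u, rfl⟩ := Quotient.exists_rep ν
  have hterm (k : Fin u.1.length) : f ⟦(rotationsEquiv u k).1⟧ / (rotationsEquiv u k).1.1.length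
        = f ⟦u⟧ / u.1.length := by
    rw [(rotationsEquiv u k).2, rotationsEquiv_apply_coe_coe, length_rotate]
  rw [← (rotationsEquiv u).tsum_eq, tsum_fintype, Finset.sum_congr rfl fun k _ => hterm k,
    Finset.sum_const, Finset.card_univ, Fintype.card_fin, nsmul_eq_mul,
    ENNReal.mul_div_cancel (by simpa using u.2.1) (ENNReal.natCast_ne_top _)]

end Necklace

theorem ENNReal.ofReal_list_prod_map {β : Type*} {f : β → ℝ} (hf : ∀ b, 0 ≤ f b) (w : List β) :
    ENNReal.ofReal (w.map f).prod = (w.map fun b => ENNReal.ofReal (f b)).prod := by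
  induction w with
  | nil => simp
  | cons b w ih => simp [ENNReal.ofReal_mul (hf b), ih]

theorem tsum_ofReal_pow_succ_div {r : ℝ} (hr : 0 ≤ r) :
    ∑' k : ℕ, ENNReal.ofReal (r ^ (k + 1) / (k + 1)) = negLogOneSub (ENNReal.ofReal r) := by
  refine tsum_congr fun k => ?_
  rw [ENNReal.ofReal_div_of_pos (by positivity), ENNReal.ofReal_pow hr]
  norm_cast

theorem nweight_nonneg {l : ℕ} {x : Fin 2 → ℝ} {y : Fin l → ℝ} (hx : ∀ i, 0 ≤ x i)
    (hy : ∀ j, 0 ≤ y j) (ν : Necklace l) : 0 ≤ nweight l x y ν := by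
  induction ν using Quotient.inductionOn with
  | h u =>
    refine mul_nonneg (List.prod_nonneg fun r hr => ?_)
      (pow_nonneg (Finset.prod_nonneg fun j _ => hy j) _)
    obtain ⟨a, -, rfl⟩ := List.mem_map.1 hr
    exact Finset.prod_nonneg fun i _ => hx _

theorem ofReal_nweight_mk {l : ℕ} {x : Fin 2 → ℝ} {y : Fin l → ℝ} (hx : ∀ i, 0 ≤ x i)
    (hy : ∀ j, 0 ≤ y j) (u : {u : List (Fin l → Fin 2) // PrimitiveW u}) :
    ENNReal.ofReal (nweight l x y ⟦u⟧) =
      (u.1.map fun a => ENNReal.ofReal ((∏ i, x (a i)) * ∏ j, y j)).prod := by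
  have hY : 0 ≤ ∏ j, y j := Finset.prod_nonneg fun j _ => hy j
  rw [← ENNReal.ofReal_list_prod_map fun a => mul_nonneg (Finset.prod_nonneg fun i _ => hx _) hY,
    prod_map_mul, map_const', prod_replicate]
  rfl

theorem stmt5_general (l : ℕ) (x : Fin 2 → ℝ) (hx : ∀ i, 0 < x i)
    (y : Fin l → ℝ) (hy : ∀ j, 0 < y j ∧ y j ≤ 1) :
    (∑' k : ℕ, ENNReal.ofReal (((x 0 + x 1) ^ l * ∏ j, y j) ^ (k + 1) / (k + 1))) =
      ∑' ν : Necklace l, ∑' d : ℕ, ENNReal.ofReal ((nweight l x y ν) ^ (d + 1) / (d + 1)) := by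
  have hx₀ (i : Fin 2) : 0 ≤ x i := (hx i).le
  have hy₀ (j : Fin l) : 0 ≤ y j := (hy j).1.le
  have hY : 0 ≤ ∏ j, y j := Finset.prod_nonneg fun j _ => hy₀ j
  have hsum : ∑ a : Fin l → Fin 2, ENNReal.ofReal ((∏ i, x (a i)) * ∏ j, y j) =
      ENNReal.ofReal ((x 0 + x 1) ^ l * ∏ j, y j) := by
    rw [← ENNReal.ofReal_sum_of_nonneg fun a _ =>
        mul_nonneg (Finset.prod_nonneg fun i _ => hx₀ _) hY, ← Finset.sum_mul, ← Fintype.sum_pow, Fin.sum_univ_two]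
  simp_rw [tsum_ofReal_pow_succ_div (nweight_nonneg hx₀ hy₀ _)]
  rw [tsum_ofReal_pow_succ_div (mul_nonneg (pow_nonneg (add_nonneg (hx₀ 0) (hx₀ 1)) l) hY), ← hsum,
    negLogOneSub_sum_eq_tsum_primitiveW, tsum_necklace]
  simp_rw [ofReal_nweight_mk hx₀ hy₀]

/-- The key contraction identity: for `x₁, x₂ ∈ (0,1]` with `x₁ + x₂ ≤ 1` and
`y_1, …, y_l ∈ (0,1]`,
`Σ_{k ≥ 1} ((x₁+x₂)^l y₁⋯y_l)^k / k = Σ_{primitive necklaces ν} Σ_{d ≥ 1} ω(ν)^d / d`,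
i.e. `-log(1 - (x₁+x₂)^l y₁⋯y_l) = Σ_ν -log(1 - ω(ν))`, where a necklace records, up
to cyclic shift, the choices of `x₁` or `x₂` at the `l` positions of each period. -/
theorem stmt5 (l : ℕ) (hl : 0 < l) (x : Fin 2 → ℝ) (hx : ∀ i, 0 < x i)
    (hx1 : x 0 + x 1 ≤ 1) (y : Fin l → ℝ) (hy : ∀ j, 0 < y j ∧ y j ≤ 1) :
    (∑' k : ℕ, ENNReal.ofReal (((x 0 + x 1) ^ l * ∏ j, y j) ^ (k + 1) / (k + 1))) =
      ∑' ν : Necklace l, ∑' d : ℕ, ENNReal.ofReal ((nweight l x y ν) ^ (d + 1) / (d + 1)) :=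
  stmt5_general l x hx y hy
end

section
/- Let A, B be directed weighted graphs. Then contraction commutes with reduction: the simple-graph collapse of Â ∷ B̂ equals the simple-graph collapse of A ∷ B, i.e. for every pair of vertices v, v' in V_A Δ V_B, the sum over alternating paths π from v to v' in A□B of Π_e ω(e) equals the product-of-sums expression Σ over alternating edge-type sequences in Â□B̂, provided all sums are interpreted in [0,∞]. -/
open scoped ENNReal

open EGraph

/-!
Collapsing parallel edges is the map `plugCollapse : A.E ⊕ B.E → Â.E ⊕ B̂.E`, which preserves
endpoints and colours, so a list of edges is an alternating path from `v` to `v'` in `A □ B`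
exactly when its image is one in `Â □ B̂`. Grouping the alternating paths of `A □ B` by their
image, it remains to see that the weight of a path of `Â □ B̂`, a product of sums over fibres of
`plugCollapse`, is the sum over its fibre of the product weights: distributivity, which holds in
`[0,∞]` for arbitrary families.
-/

namespace List

variable {α β : Type*}

def mapFiberConsEquiv (f : α → β) (b : β) (m : List β) :
    {a // f a = b} × {l : List α // l.map f = m} ≃ {l : List α // l.map f = b :: m} where
  toFun p := ⟨p.1.1 :: p.2.1, by simp [p.1.2, p.2.2]⟩
  invFun
    | ⟨[], h⟩ => absurd h (by simp)
    | ⟨a :: l, h⟩ => ⟨⟨a, (cons_eq_cons.mp h).1⟩, ⟨l, (cons_eq_cons.mp h).2⟩⟩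
  left_inv _ := rfl
  right_inv
    | ⟨[], h⟩ => absurd h (by simp)
    | ⟨_ :: _, _⟩ => rfl

end List

namespace ENNReal

variable {α β γ δ : Type*}

theorem tsum_subtype_eq_tsum_fiber (f : α → β) {p : α → Prop} {q : β → Prop}
    (h : ∀ a, p a ↔ q (f a)) (g : α → ℝ≥0∞) :
    ∑' a : Subtype p, g a = ∑' b : Subtype q, ∑' a : {a // f a = b}, g a := by
  rw [← (Equiv.sigmaSubtypeFiberEquivSubtype f h).tsum_eq, ENNReal.tsum_sigma']
  rfl

theorem list_prod_map_tsum_fiber (f : α → β) (w : α → ℝ≥0∞) (m : List β) :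
    (m.map fun b => ∑' a : {a // f a = b}, w a).prod =
      ∑' l : {l : List α // l.map f = m}, (l.1.map w).prod := by
  induction m with
  | nil =>
    rw [tsum_eq_single (⟨[], rfl⟩ : {l : List α // l.map f = []})
      fun l hl => absurd (Subtype.ext (List.map_eq_nil_iff.mp l.2)) hl]
    rfl
  | cons b m ih =>
    rw [List.map_cons, List.prod_cons, ih, ← ENNReal.tsum_mul_right]
    simp_rw [← ENNReal.tsum_mul_left]
    rw [← (List.mapFiberConsEquiv f b m).tsum_eq, ENNReal.tsum_prod']
    rfl

theorem tsum_fiber_sumMap (g : α → γ) (h : β → δ) (u : α → ℝ≥0∞) (v : β → ℝ≥0∞)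
    (y : γ ⊕ δ) :
    ∑' x : {x // Sum.map g h x = y}, Sum.elim u v x =
      Sum.elim (fun c => ∑' a : {a // g a = c}, u a) (fun d => ∑' b : {b // h b = d}, v b) y := by
  rw [← Equiv.subtypeSum.symm.tsum_eq, ENNReal.summable.tsum_sum ENNReal.summable]
  cases y with
  | inl c =>
    have : IsEmpty {b // Sum.map g h (.inr b) = .inl c} := ⟨fun b => Sum.inr_ne_inl b.2⟩
    simp only [tsum_empty, add_zero]
    exact (Equiv.subtypeEquivRight fun a => Sum.inl_injective.eq_iff).tsum_eq
      fun a : {a // g a = c} => u a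
  | inr d =>
    have : IsEmpty {a // Sum.map g h (.inl a) = .inr d} := ⟨fun a => Sum.inl_ne_inr a.2⟩
    simp only [tsum_empty, zero_add]
    exact (Equiv.subtypeEquivRight fun b => Sum.inr_injective.eq_iff).tsum_eq
      fun b : {b // h b = d} => v b

end ENNReal

namespace EGraph

variable {V : Type}

def IsAltStep (G H : EGraph V) (e f : G.E ⊕ H.E) : Prop :=
  ptgt G H e = psrc G H f ∧ e.isLeft ≠ f.isLeft

def IsAltPathFromTo (G H : EGraph V) (v v' : V) (l : List (G.E ⊕ H.E)) : Prop :=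
  ∃ hl : l ≠ [], l.IsChain (IsAltStep G H) ∧
    psrc G H (l.head hl) = v ∧ ptgt G H (l.getLast hl) = v'

def toCollapse (G : EGraph V) (e : G.E) : (collapse G).E := ⟨(G.src e, G.tgt e), e, rfl, rfl⟩

theorem collapse_w_eq_tsum_fiber (G : EGraph V) (f : (collapse G).E) :
    (collapse G).w f = ∑' e : {e // G.toCollapse e = f}, G.w e :=
  (Equiv.subtypeEquivRight (p := fun e => G.src e = f.1.1 ∧ G.tgt e = f.1.2)
    fun e => (Subtype.ext_iff.trans Prod.ext_iff : G.toCollapse e = f ↔ _).symm).tsum_eq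
      fun e : {e // G.toCollapse e = f} => G.w e

def plugCollapse (A B : EGraph V) : A.E ⊕ B.E → (collapse A).E ⊕ (collapse B).E :=
  Sum.map A.toCollapse B.toCollapse

section PlugCollapse

variable (A B : EGraph V)

theorem pw_collapse (y : (collapse A).E ⊕ (collapse B).E) :
    pw (collapse A) (collapse B) y = ∑' x : {x // plugCollapse A B x = y}, pw A B x := by
  rw [pw, plugCollapse, pw, ENNReal.tsum_fiber_sumMap]
  cases y <;> exact collapse_w_eq_tsum_fiber _ _

theorem psrc_plugCollapse (e : A.E ⊕ B.E) :
    psrc (collapse A) (collapse B) (plugCollapse A B e) = psrc A B e := by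
  cases e <;> rfl

theorem ptgt_plugCollapse (e : A.E ⊕ B.E) :
    ptgt (collapse A) (collapse B) (plugCollapse A B e) = ptgt A B e := by
  cases e <;> rfl

theorem isAltStep_plugCollapse (e f : A.E ⊕ B.E) :
    IsAltStep (collapse A) (collapse B) (plugCollapse A B e) (plugCollapse A B f) ↔
      IsAltStep A B e f := by
  cases e <;> cases f <;> rfl

theorem isAltPathFromTo_map_plugCollapse (v v' : V) (l : List (A.E ⊕ B.E)) :
    IsAltPathFromTo (collapse A) (collapse B) v v' (l.map (plugCollapse A B)) ↔
      IsAltPathFromTo A B v v' l := by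
  simp only [IsAltPathFromTo, ne_eq, List.map_eq_nil_iff, List.isChain_map,
    isAltStep_plugCollapse, List.head_map, List.getLast_map, psrc_plugCollapse,
    ptgt_plugCollapse]

end PlugCollapse

variable [DecidableEq V] {G H : EGraph V} {v v' : V}

def reductEdgesEquiv
    (hv : v ∈ symmDiff G.verts H.verts) (hv' : v' ∈ symmDiff G.verts H.verts) :
    {e : (reduct G H).E // (reduct G H).src e = v ∧ (reduct G H).tgt e = v'} ≃
      {l : List (G.E ⊕ H.E) // IsAltPathFromTo G H v v' l} where
  toFun e := ⟨e.1.1.edges, e.1.1.ne, e.1.1.chain, e.2⟩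
  invFun l := ⟨⟨⟨l.1, l.2.1, l.2.2.1⟩,
      (congrArg (· ∈ symmDiff G.verts H.verts) l.2.2.2.1).mpr hv,
      (congrArg (· ∈ symmDiff G.verts H.verts) l.2.2.2.2).mpr hv'⟩, l.2.2.2⟩
  left_inv _ := rfl
  right_inv _ := rfl

theorem adj_reduct_eq_tsum
    (hv : v ∈ symmDiff G.verts H.verts) (hv' : v' ∈ symmDiff G.verts H.verts) :
    adj (reduct G H) v v' =
      ∑' l : {l : List (G.E ⊕ H.E) // IsAltPathFromTo G H v v' l}, (l.1.map (pw G H)).prod :=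
  (reductEdgesEquiv hv hv').tsum_eq fun l => (l.1.map (pw G H)).prod

end EGraph

theorem stmt7_general {V : Type} [DecidableEq V] (A B : EGraph V) :
    (reduct A B).verts = (reduct (collapse A) (collapse B)).verts ∧
    ∀ v v', v ∈ symmDiff A.verts B.verts → v' ∈ symmDiff A.verts B.verts →
      adj (reduct A B) v v' = adj (reduct (collapse A) (collapse B)) v v' := by
  refine ⟨rfl, fun v v' hv hv' => ?_⟩
  rw [adj_reduct_eq_tsum hv hv', adj_reduct_eq_tsum (G := collapse A) (H := collapse B) hv hv',
    ENNReal.tsum_subtype_eq_tsum_fiber (List.map (plugCollapse A B))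
      (fun l => (isAltPathFromTo_map_plugCollapse A B v v' l).symm)
      fun l => (l.map (pw A B)).prod]
  refine tsum_congr fun m => ?_
  rw [← ENNReal.list_prod_map_tsum_fiber, funext (pw_collapse A B)]

/-- Contraction commutes with reduction: `(Â ∷ B̂)^ = (A ∷ B)^`. The collapsed
reductions have the same vertices, and for every pair of vertices `v, v'` in
`V_A Δ V_B` the total weight of the alternating paths from `v` to `v'` in `A □ B`
equals the corresponding total weight in `Â □ B̂` (sums taken in `[0,∞]`). -/
theorem stmt7 {V : Type} [DecidableEq V] (A B : EGraph V)
    [Countable A.E] [Countable B.E] :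
    (reduct A B).verts = (reduct (collapse A) (collapse B)).verts ∧
    ∀ v v', v ∈ symmDiff A.verts B.verts → v' ∈ symmDiff A.verts B.verts →
      adj (reduct A B) v v' = adj (reduct (collapse A) (collapse B)) v v' :=
  stmt7_general A B
end

section
/- (Mix rule) If a ⊥ b and c ⊥ d are projects such that the carrier of a (= carrier of b) is disjoint from the carrier of c (= carrier of d), then a⊗c ⊥ b⊗d. Consequently A⊗B ⊆ A⅋B := (A^⊥ ⊗ B^⊥)^⊥ for conducts A, B of disjoint carriers. -/
open scoped ENNReal

open EGraph

variable {V : Type} [DecidableEq V]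

private lemma list_prod_pos {l : List ℝ≥0∞} (h : ∀ x ∈ l, 0 < x) : 0 < l.prod := by
  induction l with
  | nil => simp
  | cons a t ih =>
    rw [List.prod_cons]
    exact ENNReal.mul_pos (h a (List.mem_cons_self)).ne'
      (ih fun x hx => h x (List.mem_cons_of_mem _ hx)).ne'

private lemma list_prod_le_one {l : List ℝ≥0∞} (h : ∀ x ∈ l, x ≤ 1) : l.prod ≤ 1 := by
  induction l with
  | nil => simp
  | cons a t ih =>
    rw [List.prod_cons]
    exact mul_le_one' (h a (List.mem_cons_self))
      (ih fun x hx => h x (List.mem_cons_of_mem _ hx))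

/-- A project: a wager together with a weighted directed graph whose weights lie in
`(0,1]`. -/
structure Project (V : Type) where
  wager : ℝ≥0∞
  graph : EGraph V
  wpos : ∀ e, 0 < graph.w e
  wle : ∀ e, graph.w e ≤ 1

namespace Project

def carrier (p : Project V) : Finset V := p.graph.verts

/-- The measurement `⟪a,b⟫ = a + b + ⟪A,B⟫` of the interaction of two projects. -/
noncomputable def pmeas (p q : Project V) : ℝ≥0∞ := p.wager + q.wager + meas p.graph q.graph

/-- Orthogonality: the measurement is neither `0` nor `∞`. -/
def orth (p q : Project V) : Prop := pmeas p q ≠ 0 ∧ pmeas p q ≠ ⊤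

/-- Tensor product of projects. -/
noncomputable def tensor (p q : Project V) : Project V where
  wager := pmeas p q
  graph := union p.graph q.graph
  wpos := by rintro (e | e); exacts [p.wpos e, q.wpos e]
  wle := by rintro (e | e); exacts [p.wle e, q.wle e]

/-- The cut of two projects (meaningful when `⟪p,q⟫ ≠ ∞`). -/
noncomputable def cut (p q : Project V) : Project V where
  wager := pmeas p q
  graph := reduct p.graph q.graph
  wpos := by
    rintro ⟨e, -⟩
    refine list_prod_pos ?_
    intro x hx
    obtain ⟨d, -, rfl⟩ := List.mem_map.1 hx
    rcases d with d | d
    exacts [p.wpos d, q.wpos d]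
  wle := by
    rintro ⟨e, -⟩
    refine list_prod_le_one ?_
    intro x hx
    obtain ⟨d, -, rfl⟩ := List.mem_map.1 hx
    rcases d with d | d
    exacts [p.wle d, q.wle d]

end Project

open Project

/-- The orthogonal of a set of projects, relative to a carrier `X`. -/
def perpOn (X : Finset V) (S : Set (Project V)) : Set (Project V) :=
  {q | q.carrier = X ∧ ∀ p ∈ S, orth p q}

/-- A conduct of carrier `X`: a nonempty set of projects of carrier `X` equal to its
biorthogonal. -/
structure IsConduct (X : Finset V) (S : Set (Project V)) : Prop where
  nonempty : S.Nonempty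
  carrier_eq : ∀ p ∈ S, p.carrier = X
  biorth : S = perpOn X (perpOn X S)

/-- `A ⊙ B`: the set of tensor products of members. -/
def setTens (A B : Set (Project V)) : Set (Project V) :=
  {r | ∃ a ∈ A, ∃ b ∈ B, r = a.tensor b}

/-- The tensor product of conducts: `A ⊗ B = (A ⊙ B)^⊥⊥`. -/
def tensConduct (X Y : Finset V) (A B : Set (Project V)) : Set (Project V) :=
  perpOn (X ∪ Y) (perpOn (X ∪ Y) (setTens A B))

/-- The linear implication `A ⊸ B = {f | ∀ a ∈ A, f ∷ a is defined and lies in B}`. -/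
def limp (X Y : Finset V) (A B : Set (Project V)) : Set (Project V) :=
  {f | f.carrier = X ∪ Y ∧ ∀ a ∈ A, pmeas f a ≠ ⊤ ∧ f.cut a ∈ B}

/-- The trace of (the collapse of) a graph. -/
noncomputable def gtrace (G : EGraph V) : ℝ≥0∞ := ∑ v ∈ G.verts, adj G v v

/-- The collapsed graph `Ĝ` is symmetric. -/
def SymmAdj (G : EGraph V) : Prop := ∀ v u, adj G v u = adj G u v

/-- `Ĝ³ = Ĝ`: the (adjacency matrix of the) graph of paths of length 3 in `Ĝ`
coincides with `Ĝ`. -/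
def CubeAdj (G : EGraph V) : Prop :=
  ∀ v u, (∑ u₁ ∈ G.verts, ∑ u₂ ∈ G.verts, adj G v u₁ * adj G u₁ u₂ * adj G u₂ u) = adj G v u

/-- A successful project: zero wager, collapsed graph symmetric, cube-idempotent and
traceless. -/
def Successful (p : Project V) : Prop :=
  p.wager = 0 ∧ SymmAdj p.graph ∧ CubeAdj p.graph ∧ gtrace p.graph = 0

/-- The collapsed graph is a disjoint union of weight-1 transpositions. -/
def IsDUT (G : EGraph V) : Prop :=
  (∀ v u, adj G v u ≠ 0 → adj G v u = 1) ∧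
  (∀ v u, adj G v u = adj G u v) ∧
  (∀ v u u', adj G v u ≠ 0 → adj G v u' ≠ 0 → u = u') ∧
  (∀ v v' u, adj G v u ≠ 0 → adj G v' u ≠ 0 → v = v') ∧
  (∀ v, adj G v v = 0)

/-- Isomorphism of located graphs: same vertices, and a weight- and endpoint-preserving
bijection of the edges. -/
def EGraph.IsIso (G H : EGraph V) : Prop :=
  G.verts = H.verts ∧ ∃ e : G.E ≃ H.E,
    (∀ x, H.src (e x) = G.src x) ∧ (∀ x, H.tgt (e x) = G.tgt x) ∧ (∀ x, H.w (e x) = G.w x)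

/-- Equality of projects up to graph isomorphism. -/
def Project.Equiv (p q : Project V) : Prop :=
  p.wager = q.wager ∧ EGraph.IsIso p.graph q.graph

/-!
Consecutive edges of an alternating path share a vertex, so when the carriers of `a`, `b` are
disjoint from those of `c`, `d`, every circuit of `(a ⊗ c) □ (b ⊗ d)` is a circuit of `a □ b`
or of `c □ d`, and there are no circuits at all between `a` and `c` or between `b` and `d`.
Hence `⟪a ⊗ c, b ⊗ d⟫ = ⟪a, b⟫ + ⟪c, d⟫`, which is finite and nonzero when both summands are.
The inclusion of conducts is then formal: Mix gives `A^⊥ ⊙ B^⊥ ⊆ (A ⊙ B)^⊥`, and taking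
orthogonals reverses inclusions while `S ⊆ S^⊥⊥`.
-/

theorem primitiveList_map_iff {α β : Type*} {f : α → β} (hf : Function.Injective f)
    {l : List α} : PrimitiveList (l.map f) ↔ PrimitiveList l := by
  refine ⟨fun h k r hl => h k (r.map f) (by simp [hl, List.map_flatten]), fun h k r hl => ?_⟩
  rcases Nat.eq_zero_or_pos k with rfl | hk
  · exact h 0 [] (by simpa using hl)
  · obtain ⟨r', rfl⟩ : r ∈ Set.range (List.map f) := by
      rw [Set.range_list_map]
      intro x hx
      have hxl : x ∈ l.map f :=
        hl ▸ List.mem_flatten.2 ⟨r, List.mem_replicate.2 ⟨hk.ne', rfl⟩, hx⟩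
      obtain ⟨a, -, rfl⟩ := List.mem_map.1 hxl
      exact ⟨a, rfl⟩
    exact h k r' (List.map_injective_iff.2 hf (by simpa [List.map_flatten] using hl))

namespace EGraph

section

variable {V : Type}

theorem AltPath.ext {G H : EGraph V} {p q : AltPath G H} (h : p.edges = q.edges) : p = q := by
  cases p; cases q; cases h; rfl

/-- An embedding of the plugging `G □ H` into `G' □ H'`. Colours need only be preserved up to
a global swap, so that `G □ H` also embeds into `H □ G`. -/
structure PlugEmb (G H G' H' : EGraph V) where
  φ : G.E ⊕ H.E → G'.E ⊕ H'.E
  injective : Function.Injective φ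
  psrc_φ : ∀ e, psrc G' H' (φ e) = psrc G H e
  ptgt_φ : ∀ e, ptgt G' H' (φ e) = ptgt G H e
  pw_φ : ∀ e, pw G' H' (φ e) = pw G H e
  isLeft_eq_iff : ∀ e f, (φ e).isLeft = (φ f).isLeft ↔ e.isLeft = f.isLeft

namespace PlugEmb

variable {G H G' H' : EGraph V} (m : PlugEmb G H G' H')

theorem isChain_map_iff {l : List (G.E ⊕ H.E)} :
    (l.map m.φ).IsChain (fun e f => ptgt G' H' e = psrc G' H' f ∧ e.isLeft ≠ f.isLeft) ↔
      l.IsChain (fun e f => ptgt G H e = psrc G H f ∧ e.isLeft ≠ f.isLeft) := by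
  simp only [List.isChain_map, m.ptgt_φ, m.psrc_φ, ne_eq, m.isLeft_eq_iff]

def mapPath (p : AltPath G H) : AltPath G' H' where
  edges := p.edges.map m.φ
  ne := mt List.map_eq_nil_iff.1 p.ne
  chain := m.isChain_map_iff.2 p.chain

theorem mapPath_src (p : AltPath G H) : (m.mapPath p).src = p.src := by
  simp only [AltPath.src, mapPath, List.head_map, m.psrc_φ]

theorem mapPath_tgt (p : AltPath G H) : (m.mapPath p).tgt = p.tgt := by
  simp only [AltPath.tgt, mapPath, List.getLast_map, m.ptgt_φ]

theorem mapPath_weight (p : AltPath G H) : (m.mapPath p).weight = p.weight := by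
  simp only [AltPath.weight, mapPath, List.map_map, Function.comp_def, m.pw_φ]

theorem isOneCycle_mapPath_iff (p : AltPath G H) :
    (m.mapPath p).IsOneCycle ↔ p.IsOneCycle := by
  rw [AltPath.IsOneCycle, AltPath.IsCycle, m.mapPath_src, m.mapPath_tgt]
  simp only [mapPath, List.getLast_map, List.head_map, ne_eq, m.isLeft_eq_iff,
    primitiveList_map_iff m.injective, AltPath.IsOneCycle, AltPath.IsCycle]

def circ : Circ G H → Circ G' H' :=
  Quotient.map (fun p => ⟨m.mapPath p.1, (m.isOneCycle_mapPath_iff p.1).2 p.2⟩)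
    (by
      rintro p q ⟨k, hk⟩
      exact ⟨k, by simp only [mapPath, hk, List.map_rotate]⟩)

theorem cweight_circ (c : Circ G H) : cweight (m.circ c) = cweight c := by
  induction c using Quotient.inductionOn with
  | _ p => exact m.mapPath_weight p.1

theorem circ_injective : Function.Injective m.circ := by
  rintro ⟨p⟩ ⟨q⟩ h
  obtain ⟨k, hk⟩ := Quotient.exact h
  refine Quotient.sound ⟨k, List.map_injective_iff.2 m.injective ?_⟩
  simpa only [mapPath, List.map_rotate] using hk

theorem mk_mem_range_circ (p : {p : AltPath G' H' // p.IsOneCycle})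
    (hp : ∀ e ∈ p.1.edges, e ∈ Set.range m.φ) : ⟦p⟧ ∈ Set.range m.circ := by
  obtain ⟨l, hl⟩ : p.1.edges ∈ Set.range (List.map m.φ) := by rwa [Set.range_list_map]
  have hne : l ≠ [] := by rintro rfl; exact p.1.ne hl.symm
  have hchain := m.isChain_map_iff.1 (hl ▸ p.1.chain)
  have hpath : m.mapPath ⟨l, hne, hchain⟩ = p.1 := AltPath.ext hl
  have hcyc : (⟨l, hne, hchain⟩ : AltPath G H).IsOneCycle :=
    (m.isOneCycle_mapPath_iff _).1 (hpath ▸ p.2)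
  exact ⟨⟦⟨_, hcyc⟩⟧, congrArg _ (Subtype.ext hpath)⟩

theorem circ_mk_ne_circ_mk {G₂ H₂ : EGraph V} (m₂ : PlugEmb G₂ H₂ G' H')
    (hdisj : Disjoint (Set.range m.φ) (Set.range m₂.φ)) (x : Circ G H) (y : Circ G₂ H₂) :
    m.circ x ≠ m₂.circ y := by
  induction x using Quotient.inductionOn with | _ p =>
  induction y using Quotient.inductionOn with | _ q =>
  intro h
  obtain ⟨k, hk⟩ := Quotient.exact h
  obtain ⟨e, he⟩ := List.exists_mem_of_ne_nil _ (m₂.mapPath q.1).ne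
  have he' : e ∈ (m.mapPath p.1).edges := List.mem_rotate.1 (hk ▸ he)
  obtain ⟨a, -, rfl⟩ := List.mem_map.1 he
  obtain ⟨b, -, hb⟩ := List.mem_map.1 he'
  exact Set.disjoint_left.1 hdisj ⟨b, hb⟩ ⟨a, rfl⟩

theorem meas_eq (hm : Function.Surjective m.φ) : meas G' H' = meas G H := by
  have hsurj : Function.Surjective m.circ := by
    rintro ⟨p⟩
    exact m.mk_mem_range_circ p fun e _ => hm e
  rw [meas, meas, ← (Equiv.ofBijective _ ⟨m.circ_injective, hsurj⟩).tsum_eq]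
  exact tsum_congr fun c => congrArg mval (m.cweight_circ c)

theorem meas_eq_add {G₂ H₂ : EGraph V} (m₂ : PlugEmb G₂ H₂ G' H')
    (hdisj : Disjoint (Set.range m.φ) (Set.range m₂.φ))
    (hcover : ∀ p : AltPath G' H', p.IsOneCycle →
      (∀ e ∈ p.edges, e ∈ Set.range m.φ) ∨ ∀ e ∈ p.edges, e ∈ Set.range m₂.φ) :
    meas G' H' = meas G H + meas G₂ H₂ := by
  have hinj : Function.Injective (Sum.elim m.circ m₂.circ) := by
    rintro (x | x) (y | y) h
    · exact congrArg Sum.inl (m.circ_injective h)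
    · exact absurd h (m.circ_mk_ne_circ_mk m₂ hdisj x y)
    · exact absurd h.symm (m.circ_mk_ne_circ_mk m₂ hdisj y x)
    · exact congrArg Sum.inr (m₂.circ_injective h)
  have hsurj : Function.Surjective (Sum.elim m.circ m₂.circ) := by
    rintro ⟨p⟩
    rcases hcover p.1 p.2 with h | h
    · obtain ⟨c, hc⟩ := m.mk_mem_range_circ p h
      exact ⟨Sum.inl c, hc⟩
    · obtain ⟨c, hc⟩ := m₂.mk_mem_range_circ p h
      exact ⟨Sum.inr c, hc⟩
  have hbij : Function.Bijective (Sum.elim m.circ m₂.circ) := ⟨hinj, hsurj⟩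
  rw [meas, meas, meas, ← (Equiv.ofBijective _ hbij).tsum_eq,
    Summable.tsum_sum ENNReal.summable ENNReal.summable]
  simp only [Equiv.ofBijective_apply, Sum.elim_inl, Sum.elim_inr, cweight_circ]

end PlugEmb

def swapPlugEmb (G H : EGraph V) : PlugEmb G H H G where
  φ := Sum.swap
  injective := Sum.swap_leftInverse.injective
  psrc_φ := by rintro (e | e) <;> rfl
  ptgt_φ := by rintro (e | e) <;> rfl
  pw_φ := by rintro (e | e) <;> rfl
  isLeft_eq_iff := by rintro (e | e) (f | f) <;> simp

theorem meas_comm (G H : EGraph V) : meas G H = meas H G :=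
  (swapPlugEmb H G).meas_eq Sum.swap_rightInverse.surjective

theorem meas_eq_zero_of_disjoint {G H : EGraph V} (h : Disjoint G.verts H.verts) :
    meas G H = 0 := by
  suffices IsEmpty (Circ G H) from tsum_empty
  refine ⟨fun c => Quotient.inductionOn c ?_⟩
  rintro ⟨⟨l, hne, hchain⟩, ⟨-, hcol⟩, -⟩
  -- the colour condition of a cycle rules out a single edge, and two consecutive edges of
  -- different colours would give a common vertex of `G` and `H`
  match l, hne, hchain, hcol with
  | [e], _, _, hcol => exact hcol rfl
  | e :: f :: _, _, hchain, _ =>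
    obtain ⟨⟨hef, hcol'⟩, -⟩ := List.isChain_cons_cons.1 hchain
    rcases e with e | e <;> rcases f with f | f
    · exact hcol' rfl
    · exact Finset.disjoint_left.1 h (G.tgt_mem e)
        ((show G.tgt e = H.src f from hef) ▸ H.src_mem f)
    · exact Finset.disjoint_left.1 h ((show H.tgt e = G.src f from hef) ▸ G.src_mem f)
        (H.tgt_mem e)
    · exact hcol' rfl

variable [DecidableEq V]

theorem psrc_mem_verts {G H : EGraph V} (e : G.E ⊕ H.E) : psrc G H e ∈ G.verts ∪ H.verts := by
  rcases e with e | e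
  exacts [Finset.mem_union_left _ (G.src_mem e), Finset.mem_union_right _ (H.src_mem e)]

theorem ptgt_mem_verts {G H : EGraph V} (e : G.E ⊕ H.E) : ptgt G H e ∈ G.verts ∪ H.verts := by
  rcases e with e | e
  exacts [Finset.mem_union_left _ (G.tgt_mem e), Finset.mem_union_right _ (H.tgt_mem e)]

namespace PlugEmb

variable {G₁ H₁ G₂ H₂ G' H' : EGraph V} (m₁ : PlugEmb G₁ H₁ G' H') (m₂ : PlugEmb G₂ H₂ G' H')

theorem disjoint_range (hV : Disjoint (G₁.verts ∪ H₁.verts) (G₂.verts ∪ H₂.verts)) :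
    Disjoint (Set.range m₁.φ) (Set.range m₂.φ) := by
  rw [Set.disjoint_left]
  rintro _ ⟨a, rfl⟩ ⟨b, hb⟩
  have hsrc : psrc G₂ H₂ b = psrc G₁ H₁ a := by rw [← m₁.psrc_φ, ← hb, m₂.psrc_φ]
  exact Finset.disjoint_left.1 hV (psrc_mem_verts a) (hsrc ▸ psrc_mem_verts b)

theorem forall_mem_range_of_head_mem (hφ : ∀ e, e ∈ Set.range m₁.φ ∨ e ∈ Set.range m₂.φ)
    (hV : Disjoint (G₁.verts ∪ H₁.verts) (G₂.verts ∪ H₂.verts)) (p : AltPath G' H')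
    (hp : p.edges.head p.ne ∈ Set.range m₁.φ) : ∀ e ∈ p.edges, e ∈ Set.range m₁.φ := by
  refine List.IsChain.induction _ _ p.chain ?_ fun _ => hp
  rintro _ f ⟨hef, -⟩ ⟨a, rfl⟩
  refine (hφ f).resolve_right ?_
  rintro ⟨b, rfl⟩
  rw [m₁.ptgt_φ, m₂.psrc_φ] at hef
  exact Finset.disjoint_left.1 hV (ptgt_mem_verts a) (hef ▸ psrc_mem_verts b)

theorem meas_eq_add_of_disjoint_verts (hφ : ∀ e, e ∈ Set.range m₁.φ ∨ e ∈ Set.range m₂.φ)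
    (hV : Disjoint (G₁.verts ∪ H₁.verts) (G₂.verts ∪ H₂.verts)) :
    meas G' H' = meas G₁ H₁ + meas G₂ H₂ := by
  refine m₁.meas_eq_add m₂ (m₁.disjoint_range m₂ hV) fun p _ => ?_
  rcases hφ (p.edges.head p.ne) with h | h
  · exact .inl (m₁.forall_mem_range_of_head_mem m₂ hφ hV p h)
  · exact .inr (m₂.forall_mem_range_of_head_mem m₁ (fun e => (hφ e).symm) hV.symm p h)

end PlugEmb

def inlPlugEmb (G₁ G₂ H₁ H₂ : EGraph V) : PlugEmb G₁ H₁ (union G₁ G₂) (union H₁ H₂) where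
  φ := Sum.map Sum.inl Sum.inl
  injective := Sum.map_injective.2 ⟨Sum.inl_injective, Sum.inl_injective⟩
  psrc_φ := by rintro (e | e) <;> rfl
  ptgt_φ := by rintro (e | e) <;> rfl
  pw_φ := by rintro (e | e) <;> rfl
  isLeft_eq_iff := by rintro (e | e) (f | f) <;> rfl

def inrPlugEmb (G₁ G₂ H₁ H₂ : EGraph V) : PlugEmb G₂ H₂ (union G₁ G₂) (union H₁ H₂) where
  φ := Sum.map Sum.inr Sum.inr
  injective := Sum.map_injective.2 ⟨Sum.inr_injective, Sum.inr_injective⟩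
  psrc_φ := by rintro (e | e) <;> rfl
  ptgt_φ := by rintro (e | e) <;> rfl
  pw_φ := by rintro (e | e) <;> rfl
  isLeft_eq_iff := by rintro (e | e) (f | f) <;> rfl

theorem meas_union {G₁ G₂ H₁ H₂ : EGraph V}
    (h : Disjoint (G₁.verts ∪ H₁.verts) (G₂.verts ∪ H₂.verts)) :
    meas (union G₁ G₂) (union H₁ H₂) = meas G₁ H₁ + meas G₂ H₂ := by
  refine (inlPlugEmb G₁ G₂ H₁ H₂).meas_eq_add_of_disjoint_verts (inrPlugEmb G₁ G₂ H₁ H₂) ?_ h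
  rintro ((e | e) | (e | e))
  exacts [.inl ⟨.inl e, rfl⟩, .inr ⟨.inl e, rfl⟩, .inl ⟨.inr e, rfl⟩, .inr ⟨.inr e, rfl⟩]

end

end EGraph

namespace Project

section

variable {V : Type}

theorem pmeas_comm (p q : Project V) : pmeas p q = pmeas q p := by
  rw [pmeas, pmeas, meas_comm, add_comm p.wager]

theorem orth.symm {p q : Project V} (h : orth p q) : orth q p := by
  rwa [orth, pmeas_comm]

variable [DecidableEq V]

theorem carrier_tensor (p q : Project V) : (p.tensor q).carrier = p.carrier ∪ q.carrier :=
  rfl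

theorem pmeas_tensor_tensor {a b c d : Project V}
    (h : Disjoint (a.carrier ∪ b.carrier) (c.carrier ∪ d.carrier)) :
    pmeas (a.tensor c) (b.tensor d) = pmeas a b + pmeas c d := by
  have hac : meas a.graph c.graph = 0 :=
    meas_eq_zero_of_disjoint (Finset.disjoint_of_subset_left Finset.subset_union_left
      (Finset.disjoint_of_subset_right Finset.subset_union_left h))
  have hbd : meas b.graph d.graph = 0 :=
    meas_eq_zero_of_disjoint (Finset.disjoint_of_subset_left Finset.subset_union_right
      (Finset.disjoint_of_subset_right Finset.subset_union_right h))
  simp only [pmeas, tensor, hac, hbd, meas_union h]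
  ring

theorem orth.tensor {a b c d : Project V} (hab : orth a b) (hcd : orth c d)
    (h : Disjoint (a.carrier ∪ b.carrier) (c.carrier ∪ d.carrier)) :
    orth (a.tensor c) (b.tensor d) := by
  rw [orth, pmeas_tensor_tensor h]
  exact ⟨fun h0 => hab.1 (add_eq_zero.1 h0).1, ENNReal.add_ne_top.2 ⟨hab.2, hcd.2⟩⟩

end

end Project

section

variable {V : Type}

theorem perpOn_anti (X : Finset V) {S T : Set (Project V)} (h : S ⊆ T) :
    perpOn X T ⊆ perpOn X S :=
  fun _ hq => ⟨hq.1, fun p hp => hq.2 p (h hp)⟩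

theorem subset_perpOn_perpOn {X : Finset V} {S : Set (Project V)}
    (hS : ∀ p ∈ S, p.carrier = X) : S ⊆ perpOn X (perpOn X S) :=
  fun p hp => ⟨hS p hp, fun _ hq => (hq.2 p hp).symm⟩

variable [DecidableEq V]

theorem setTens_perpOn_subset {X Y : Finset V} (hXY : Disjoint X Y) {A B : Set (Project V)}
    (hA : ∀ a ∈ A, a.carrier = X) (hB : ∀ b ∈ B, b.carrier = Y) :
    setTens (perpOn X A) (perpOn Y B) ⊆ perpOn (X ∪ Y) (setTens A B) := by
  rintro _ ⟨a', ⟨ha', ha'A⟩, b', ⟨hb', hb'B⟩, rfl⟩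
  refine ⟨by rw [carrier_tensor, ha', hb'], ?_⟩
  rintro _ ⟨a, ha, b, hb, rfl⟩
  refine (ha'A a ha).tensor (hb'B b hb) ?_
  rwa [hA a ha, hB b hb, ha', hb', Finset.union_self, Finset.union_self]

theorem tensConduct_subset_perpOn_tensConduct_perpOn {X Y : Finset V} (hXY : Disjoint X Y)
    {A B : Set (Project V)} (hA : ∀ a ∈ A, a.carrier = X) (hB : ∀ b ∈ B, b.carrier = Y) :
    tensConduct X Y A B ⊆ perpOn (X ∪ Y) (tensConduct X Y (perpOn X A) (perpOn Y B)) :=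
  calc tensConduct X Y A B
      ⊆ perpOn (X ∪ Y) (setTens (perpOn X A) (perpOn Y B)) :=
        perpOn_anti _ (setTens_perpOn_subset hXY hA hB)
    _ ⊆ _ := subset_perpOn_perpOn fun _ hq => hq.1

end

/-- The Mix rule: if `a ⊥ b` and `c ⊥ d` with the carrier of `a` (= that of `b`)
disjoint from the carrier of `c` (= that of `d`), then `a ⊗ c ⊥ b ⊗ d`.
Consequently `A ⊗ B ⊆ A ⅋ B = (A^⊥ ⊗ B^⊥)^⊥` for conducts `A`, `B` of disjoint
carriers. -/
theorem stmt10 {V : Type} [DecidableEq V] (X Y : Finset V) (hXY : X ∩ Y = ∅)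
    (A B : Set (Project V)) (hA : IsConduct X A) (hB : IsConduct Y B) :
    (∀ a b c d : Project V, orth a b → orth c d →
      a.carrier = X → b.carrier = X → c.carrier = Y → d.carrier = Y →
      orth (a.tensor c) (b.tensor d)) ∧
    tensConduct X Y A B ⊆ perpOn (X ∪ Y) (tensConduct X Y (perpOn X A) (perpOn Y B)) := by
  have hdisj : Disjoint X Y := Finset.disjoint_iff_inter_eq_empty.2 hXY
  refine ⟨fun a b c d hab hcd ha hb hc hd => hab.tensor hcd ?_,
    tensConduct_subset_perpOn_tensConduct_perpOn hdisj hA.carrier_eq hB.carrier_eq⟩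
  rwa [ha, hb, hc, hd, Finset.union_self, Finset.union_self]
end
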